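/- arXiv:1306.0079 — 9 statements merged into one kernel-verified Lean document; each statement's English description precedes it below -/
import Mathlib

section
/- Let B be an n×n real expanding matrix with |det B| ∈ ℤ and let D ⊂ ℝⁿ be a finite set with 0 ∈ D and card D = |det B|. Then the Lebesgue measure of the self-affine set K(B,D) equals the reciprocal of the upper Beurling density of μ: |K(B,D)| = (D⁺(μ))⁻¹, as an equality in [0,∞] (so in particular |K(B,D)| = 0 exactly when D⁺(μ) = ∞). -/
open MeasureTheory Filter
open scoped ENNReal

/-- The upper Beurling density of a positive Borel measure on ℝⁿ:
`D⁺(ν) = limsup_{N→∞} sup_{z} ν(I_N(z)) / Nⁿ`, where `I_N(z)` is the closed cube of side `N`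
centered at `z`. -/
noncomputable def beurlingUpper {n : ℕ} (ν : Measure (EuclideanSpace ℝ (Fin n))) : ℝ≥0∞ :=
  Filter.limsup (fun N : ℝ =>
    ⨆ z : EuclideanSpace ℝ (Fin n),
      ν {y | ∀ i, |y i - z i| ≤ N / 2} / ENNReal.ofReal (N ^ n)) Filter.atTop

/-- The measure `μ = sup_N μ_N`, where
`μ_N = Σ_{d_0,…,d_{N−1} ∈ D} δ_{d_0 + B d_1 + ⋯ + B^{N−1} d_{N−1}}` (sum over all `N`-tuples
of digits, counted with multiplicity). -/
noncomputable def selfAffineMeasure {n : ℕ} (B : Matrix (Fin n) (Fin n) ℝ)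
    (D : Finset (EuclideanSpace ℝ (Fin n))) : Measure (EuclideanSpace ℝ (Fin n)) :=
  ⨆ N : ℕ, Measure.sum (fun f : Fin N → D =>
    Measure.dirac (∑ j : Fin N, Matrix.toEuclideanLin (B ^ (j : ℕ)) (f j)))

/-!
Let `μ_N` be the point measure of the digit sums `π_N f = Σ_{j<N} Bʲ f_j`, so that `μ = ⨆ μ_N`.
Iterating the self-affinity gives `Bᴺ K = ⋃_f (K + π_N f)`, and `card D = |det B|` makes the
volume of the left side, `(card D)ᴺ vol K`, equal to the sum of the volumes of the pieces: the
translates of `K` overlap only in measure zero. Packing those lying over a cube `I` into a slightly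
larger cube gives `μ(I) vol K ≤ vol(I + K)`, hence `D⁺(μ) ≤ 1 / vol K`.

Conversely, `0 ∈ K`, so every point of `μ_N` lies in `Bᴺ K`; averaging `z ↦ μ_N(I_L(z))` over
`z ∈ Bᴺ K + I_L` produces a cube of side `L` carrying at least `Lⁿ / vol(K + B⁻ᴺ I_L)` points.
Since `B⁻ᴺ → 0` (Gelfand's formula), `K + B⁻ᴺ I_L` shrinks to `K`, and `D⁺(μ) ≥ 1 / vol K`.
-/

open Matrix
open scoped Pointwise Topology Matrix.Norms.L2Operator

namespace MeasureTheory

variable {α : Type*} [MeasurableSpace α]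

theorem Measure.iSup_apply_of_monotone {μ : ℕ → Measure α} (hμ : Monotone μ) {s : Set α}
    (hs : MeasurableSet s) : (⨆ N, μ N) s = ⨆ N, μ N s := by
  have iSup_tsum : ∀ t : ℕ → Set α, ⨆ N, ∑' i, μ N (t i) = ∑' i, ⨆ N, μ N (t i) := fun t => by
    simp only [← lintegral_count]
    exact (lintegral_iSup (fun _ => measurable_of_countable _)
      fun _ _ hNM i => hμ hNM (t i)).symm
  let ν : Measure α := Measure.ofMeasurable (fun t _ => ⨆ N, μ N t) (by simp)
    fun t ht hd => by simp only [measure_iUnion hd ht, iSup_tsum]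
  have hν : (⨆ N, μ N) ≤ ν := iSup_le fun N => Measure.le_iff.2 fun t ht => by
    simpa only [ν, Measure.ofMeasurable_apply t ht] using le_iSup (μ · t) N
  exact le_antisymm ((hν s).trans_eq (Measure.ofMeasurable_apply s hs))
    (iSup_le fun N => le_iSup μ N s)

theorem sum_measure_le_measure_biUnion_of_measure_iUnion_eq_sum {ι : Type*} [Fintype ι]
    (μ : Measure α) {A : ι → Set α} (hA : ∀ i, μ (A i) ≠ ∞)
    (hunion : μ (⋃ i, A i) = ∑ i, μ (A i)) (S : Finset ι) :
    ∑ i ∈ S, μ (A i) ≤ μ (⋃ i ∈ S, A i) := by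
  classical
  have hrest : ∑ i ∈ Sᶜ, μ (A i) ≠ ∞ := ENNReal.sum_ne_top.2 fun i _ => hA i
  refine (ENNReal.add_le_add_iff_right hrest).1 ?_
  calc ∑ i ∈ S, μ (A i) + ∑ i ∈ Sᶜ, μ (A i) = μ (⋃ i, A i) := by
        rw [hunion, Finset.sum_add_sum_compl]
    _ ≤ μ ((⋃ i ∈ S, A i) ∪ ⋃ i ∈ Sᶜ, A i) := measure_mono fun x hx => by
        obtain ⟨i, hi⟩ := Set.mem_iUnion.1 hx
        by_cases hiS : i ∈ S
        · exact Or.inl (Set.mem_biUnion hiS hi)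
        · exact Or.inr (Set.mem_biUnion (Finset.mem_compl.2 hiS) hi)
    _ ≤ μ (⋃ i ∈ S, A i) + ∑ i ∈ Sᶜ, μ (A i) :=
        (measure_union_le _ _).trans (add_le_add_right (measure_biUnion_finset_le _ _) _)

theorem lintegral_le_iSup_mul_of_support_subset (μ : Measure α) {f : α → ℝ≥0∞} {s : Set α}
    (hf : Function.support f ⊆ s) : ∫⁻ x, f x ∂μ ≤ (⨆ x, f x) * μ s :=
  calc ∫⁻ x, f x ∂μ = ∫⁻ x in s, f x ∂μ := (setLIntegral_eq_of_support_subset hf).symm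
    _ ≤ ∫⁻ _ in s, ⨆ y, f y ∂μ := lintegral_mono fun x => le_iSup f x
    _ = (⨆ x, f x) * μ s := setLIntegral_const s _

theorem measure_image_add_right {G : Type*} [MeasurableSpace G] [AddGroup G] [MeasurableAdd G]
    (μ : Measure G) [μ.IsAddRightInvariant] (v : G) (S : Set G) :
    μ ((· + v) '' S) = μ S := by
  rw [Set.image_add_right, measure_preimage_add_right]

theorem iInf_measure_add_le_of_forall_subset_closedBall {E : Type*} [NormedAddCommGroup E]
    [MeasurableSpace E] [OpensMeasurableSpace E] [ProperSpace E] (μ : Measure E)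
    [IsFiniteMeasureOnCompacts μ] {K : Set E} (hK : IsCompact K) {s : ℕ → Set E}
    (hs : ∀ δ > 0, ∃ N, s N ⊆ Metric.closedBall 0 δ) : ⨅ N, μ (K + s N) ≤ μ K := by
  refine le_of_forall_gt fun c hc => ?_
  obtain ⟨δ, hδ, hδc⟩ :=
    ((tendsto_measure_cthickening_of_isCompact hK).eventually (gt_mem_nhds hc)).exists_gt
  obtain ⟨N, hN⟩ := hs δ hδ
  calc ⨅ N, μ (K + s N) ≤ μ (K + Metric.closedBall 0 δ) :=
        (iInf_le _ N).trans (measure_mono (Set.add_subset_add_left hN))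
    _ < c := by rwa [hK.add_closedBall_zero hδ.le]

end MeasureTheory

theorem ENNReal.inv_le_div_of_le_mul {a b c : ℝ≥0∞} (ha : a ≠ 0) (ha' : a ≠ ∞) (h : a ≤ b * c) :
    c⁻¹ ≤ b / a := by
  rw [ENNReal.le_div_iff_mul_le (.inl ha) (.inl ha')]
  calc c⁻¹ * a ≤ c⁻¹ * (b * c) := by gcongr
    _ = b * (c⁻¹ * c) := by ring
    _ ≤ b := mul_le_of_le_one_right' (ENNReal.inv_mul_le_one c)

section Spectrum

variable {A : Type*} [NormedRing A] [NormedAlgebra ℂ A] [CompleteSpace A]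

theorem spectralRadius_inv_lt_one {u : Aˣ} (hu : ∀ k ∈ spectrum ℂ (u : A), 1 < ‖k‖) :
    spectralRadius ℂ (↑u⁻¹ : A) < 1 := by
  rcases (spectrum ℂ (↑u⁻¹ : A)).eq_empty_or_nonempty with hempty | hne
  · simp [spectralRadius, hempty]
  refine spectrum.spectralRadius_lt_of_forall_lt_of_nonempty hne fun k hk => ?_
  have hk0 : k ≠ 0 := by
    rintro rfl
    exact (spectrum.zero_notMem_iff ℂ).2 u⁻¹.isUnit hk
  have hkinv : 1 < ‖k⁻¹‖ := by
    simpa using hu _ ((spectrum.inv_mem_iff (r := Units.mk0 k hk0) (a := u⁻¹)).1 hk)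
  rw [norm_inv, one_lt_inv₀ (norm_pos_iff.2 hk0)] at hkinv
  exact_mod_cast hkinv

theorem tendsto_pow_atTop_nhds_zero_of_spectralRadius_lt_one {a : A}
    (ha : spectralRadius ℂ a < 1) : Tendsto (a ^ ·) atTop (𝓝 0) := by
  obtain ⟨r, hρr, hr1⟩ := exists_between ha
  have hbound : ∀ᶠ N : ℕ in atTop, (‖a ^ N‖₊ : ℝ≥0∞) ≤ r ^ N := by
    filter_upwards [(spectrum.pow_nnnorm_pow_one_div_tendsto_nhds_spectralRadius a
      ).eventually_lt_const hρr, eventually_ne_atTop 0] with N hN hN0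
    calc (‖a ^ N‖₊ : ℝ≥0∞) = ((‖a ^ N‖₊ : ℝ≥0∞) ^ (1 / (N : ℝ))) ^ N := by
          rw [← ENNReal.rpow_natCast, ← ENNReal.rpow_mul, one_div_mul_cancel (by positivity),
            ENNReal.rpow_one]
      _ ≤ r ^ N := pow_le_pow_left' hN.le N
  have hnorm : Tendsto (fun N => (‖a ^ N‖₊ : ℝ≥0∞)) atTop (𝓝 0) :=
    tendsto_of_tendsto_of_tendsto_of_le_of_le' tendsto_const_nhds
      (ENNReal.tendsto_pow_atTop_nhds_zero_of_lt_one hr1) (.of_forall fun _ => zero_le) hbound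
  rw [← ENNReal.coe_zero, ENNReal.tendsto_coe, ← NNReal.tendsto_coe] at hnorm
  exact tendsto_zero_iff_norm_tendsto_zero.2 (by simpa using hnorm)

end Spectrum

section Cube

variable {ι : Type*}

def cube (z : EuclideanSpace ℝ ι) (r : ℝ) : Set (EuclideanSpace ℝ ι) :=
  {y | ∀ i, |y i - z i| ≤ r}

theorem mem_cube_comm {y z : EuclideanSpace ℝ ι} {r : ℝ} : y ∈ cube z r ↔ z ∈ cube y r := by
  simp only [cube, Set.mem_ofPred_eq, abs_sub_comm]

theorem add_mem_cube {x z v : EuclideanSpace ℝ ι} {r s : ℝ} (hx : x ∈ cube z r)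
    (hv : v ∈ cube 0 s) : x + v ∈ cube z (r + s) := fun i => by
  have hvi : |v i| ≤ s := by simpa using hv i
  calc |(x + v) i - z i| = |(x i - z i) + v i| := by simp only [PiLp.add_apply]; ring_nf
    _ ≤ r + s := (abs_add_le _ _).trans (add_le_add (hx i) hvi)

theorem cube_eq_preimage_ofLp (z : EuclideanSpace ℝ ι) (r : ℝ) :
    cube z r = WithLp.ofLp ⁻¹' Set.univ.pi fun i => Set.Icc (z i - r) (z i + r) := by
  ext y
  simp only [cube, Set.mem_ofPred_eq, Set.mem_preimage, Set.mem_univ_pi, Set.mem_Icc,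
    abs_sub_le_iff]
  exact forall_congr' fun i => by constructor <;> rintro ⟨h1, h2⟩ <;> constructor <;> linarith

theorem isCompact_cube (z : EuclideanSpace ℝ ι) (r : ℝ) : IsCompact (cube z r) := by
  rw [cube_eq_preimage_ofLp]
  exact (PiLp.continuousLinearEquiv 2 ℝ _).toHomeomorph.isCompact_preimage.2
    (isCompact_univ_pi fun _ => isCompact_Icc)

variable [Fintype ι]

theorem measurableSet_cube (z : EuclideanSpace ℝ ι) (r : ℝ) : MeasurableSet (cube z r) :=
  (isCompact_cube z r).isClosed.measurableSet

theorem volume_cube (z : EuclideanSpace ℝ ι) {r : ℝ} (hr : 0 ≤ r) :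
    volume (cube z r) = ENNReal.ofReal ((2 * r) ^ Fintype.card ι) := by
  rw [cube_eq_preimage_ofLp, (PiLp.volume_preserving_ofLp ι).measure_preimage
    (MeasurableSet.univ_pi fun _ => measurableSet_Icc).nullMeasurableSet, volume_pi_pi]
  simp only [Real.volume_Icc, show ∀ a, a + r - (a - r) = 2 * r from fun a => by ring,
    Finset.prod_const, Finset.card_univ, ENNReal.ofReal_pow (by positivity : 0 ≤ 2 * r)]

theorem IsCompact.exists_subset_cube {K : Set (EuclideanSpace ℝ ι)} (hK : IsCompact K) :
    ∃ R > 0, K ⊆ cube 0 R := by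
  obtain ⟨R, hR0, hR⟩ := hK.isBounded.exists_pos_norm_le
  exact ⟨R, hR0, fun x hx i => by simpa using (PiLp.norm_apply_le x i).trans (hR x hx)⟩

end Cube

namespace Matrix

variable {ι : Type*} [Fintype ι] [DecidableEq ι]

def IsExpanding (B : Matrix ι ι ℝ) : Prop :=
  ∀ μ ∈ spectrum ℂ (B.map (algebraMap ℝ ℂ)), 1 < ‖μ‖

theorem norm_toEuclideanLin_le (A : Matrix ι ι ℝ) (x : EuclideanSpace ℝ ι) :
    ‖toEuclideanLin A x‖ ≤ ‖A‖ * ‖x‖ :=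
  (toEuclideanCLM (𝕜 := ℝ) A).le_opNorm x

theorem volume_image_toEuclideanLin (A : Matrix ι ι ℝ) (S : Set (EuclideanSpace ℝ ι)) :
    volume (toEuclideanLin A '' S) = ENNReal.ofReal |A.det| * volume S := by
  rw [Measure.addHaar_image_linearMap, LinearMap.det_toLpLin]

theorem toEuclideanLin_nonsing_inv_apply_apply {A : Matrix ι ι ℝ} (hA : IsUnit A.det)
    (x : EuclideanSpace ℝ ι) : toEuclideanLin A⁻¹ (toEuclideanLin A x) = x := by
  rw [← LinearMap.comp_apply, ← toLpLin_mul_same, nonsing_inv_mul A hA, toLpLin_one,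
    LinearMap.id_apply]

theorem toEuclideanLin_apply_nonsing_inv_apply {A : Matrix ι ι ℝ} (hA : IsUnit A.det)
    (x : EuclideanSpace ℝ ι) : toEuclideanLin A (toEuclideanLin A⁻¹ x) = x := by
  rw [← LinearMap.comp_apply, ← toLpLin_mul_same, mul_nonsing_inv A hA, toLpLin_one,
    LinearMap.id_apply]

namespace IsExpanding

variable {B : Matrix ι ι ℝ} (hB : B.IsExpanding)
include hB

theorem isUnit_det : IsUnit B.det := by
  have hunit : IsUnit (B.map (algebraMap ℝ ℂ)) :=
    (spectrum.zero_notMem_iff ℂ).1 fun h0 => absurd (hB 0 h0) (by simp)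
  rw [isUnit_iff_isUnit_det, ← RingHom.mapMatrix_apply, ← RingHom.map_det] at hunit
  exact isUnit_iff_ne_zero.2 fun h => by simp [h] at hunit

theorem tendsto_inv_pow : Tendsto (fun N => B⁻¹ ^ N) atTop (𝓝 0) := by
  have hdet := hB.isUnit_det
  let u : (Matrix ι ι ℂ)ˣ :=
    ⟨B.map (algebraMap ℝ ℂ), B⁻¹.map (algebraMap ℝ ℂ),
      by rw [← Matrix.map_mul, mul_nonsing_inv B hdet, Matrix.map_one _ (map_zero _) (map_one _)],
      by rw [← Matrix.map_mul, nonsing_inv_mul B hdet, Matrix.map_one _ (map_zero _) (map_one _)]⟩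
  have hC := tendsto_pow_atTop_nhds_zero_of_spectralRadius_lt_one (spectralRadius_inv_lt_one
    (u := u) hB)
  have hre := ((continuous_id.matrix_map Complex.continuous_re).tendsto 0).comp hC
  have hmap : ∀ N, ((↑u⁻¹ : Matrix ι ι ℂ) ^ N).map Complex.re = B⁻¹ ^ N := fun N => by
    simp only [u, Units.inv_mk]
    rw [← Matrix.map_pow, Matrix.map_map]
    exact Matrix.ext fun i j => Complex.ofReal_re _
  simpa only [Function.comp_def, id, hmap, Matrix.map_zero _ Complex.zero_re] using hre

theorem exists_image_inv_pow_subset_closedBall {J : Set (EuclideanSpace ℝ ι)}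
    (hJ : Bornology.IsBounded J) {δ : ℝ} (hδ : 0 < δ) :
    ∃ N, toEuclideanLin (B⁻¹ ^ N) '' J ⊆ Metric.closedBall 0 δ := by
  obtain ⟨C, hC, hJC⟩ := hJ.exists_pos_norm_le
  obtain ⟨N, hN⟩ := ((tendsto_zero_iff_norm_tendsto_zero.1 hB.tendsto_inv_pow).eventually
    (ge_mem_nhds (div_pos hδ hC))).exists
  refine ⟨N, ?_⟩
  rintro _ ⟨v, hv, rfl⟩
  rw [mem_closedBall_zero_iff]
  calc ‖toEuclideanLin (B⁻¹ ^ N) v‖ ≤ ‖B⁻¹ ^ N‖ * ‖v‖ := norm_toEuclideanLin_le _ v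
    _ ≤ δ / C * C := mul_le_mul hN (hJC v hv) (norm_nonneg _) (by positivity)
    _ = δ := div_mul_cancel₀ _ hC.ne'

end IsExpanding

end Matrix

section PointMeasure

variable {α κ : Type*} [MeasurableSpace α]

noncomputable def pointMeasure (p : κ → α) : Measure α :=
  Measure.sum fun i => Measure.dirac (p i)

theorem pointMeasure_apply [Fintype κ] (p : κ → α) {s : Set α} (hs : MeasurableSet s) :
    pointMeasure p s = ∑ i, s.indicator 1 (p i) := by
  simp [pointMeasure, Measure.dirac_apply' _ hs]

variable {ι : Type*} [Fintype ι] [Fintype κ]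

theorem card_mul_volume_cube_le (p : κ → EuclideanSpace ℝ ι) {P : Set (EuclideanSpace ℝ ι)}
    (hP : ∀ i, p i ∈ P) {r : ℝ} (hr : 0 ≤ r) :
    Fintype.card κ * volume (cube (0 : EuclideanSpace ℝ ι) r) ≤
      (⨆ z, pointMeasure p (cube z r)) * volume (P + cube 0 r) := by
  have hcount : ∀ z, pointMeasure p (cube z r) = ∑ i, (cube (p i) r).indicator 1 z := fun z => by
    rw [pointMeasure_apply p (measurableSet_cube z r)]
    exact Finset.sum_congr rfl fun i _ => by
      classical
      simp only [Set.indicator, Pi.one_apply]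
      exact if_congr mem_cube_comm rfl rfl
  have hsupport : Function.support (fun z => pointMeasure p (cube z r)) ⊆ P + cube 0 r := by
    intro z hz
    obtain ⟨i, -, hi⟩ := Finset.exists_ne_zero_of_sum_ne_zero ((hcount z).symm.trans_ne hz)
    refine ⟨p i, hP i, z - p i, fun j => ?_, add_sub_cancel _ _⟩
    simpa [abs_sub_comm] using Set.mem_of_indicator_ne_zero hi j
  calc Fintype.card κ * volume (cube 0 r) = ∑ i, volume (cube (p i) r) := by
        simp [volume_cube _ hr]
    _ = ∫⁻ z, pointMeasure p (cube z r) := by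
        simp only [hcount]
        rw [lintegral_finsetSum _ fun i _ => measurable_one.indicator (measurableSet_cube _ _)]
        simp [lintegral_indicator_one (measurableSet_cube _ _)]
    _ ≤ _ := lintegral_le_iSup_mul_of_support_subset _ hsupport

theorem pointMeasure_cube_mul_volume_le (p : κ → EuclideanSpace ℝ ι)
    {K : Set (EuclideanSpace ℝ ι)} (hK : volume K ≠ ∞) {R : ℝ} (hKR : K ⊆ cube 0 R)
    (hunion : volume (⋃ i, (· + p i) '' K) = ∑ i, volume ((· + p i) '' K))
    (z : EuclideanSpace ℝ ι) (r : ℝ) :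
    pointMeasure p (cube z r) * volume K ≤ volume (cube z (r + R)) := by
  classical
  let S := Finset.univ.filter fun i => p i ∈ cube z r
  calc pointMeasure p (cube z r) * volume K = ∑ i ∈ S, volume ((· + p i) '' K) := by
        simp [S, pointMeasure_apply p (measurableSet_cube z r), Set.indicator_apply]
    _ ≤ volume (⋃ i ∈ S, (· + p i) '' K) :=
        sum_measure_le_measure_biUnion_of_measure_iUnion_eq_sum volume
          (fun i => by rwa [measure_image_add_right]) hunion S
    _ ≤ volume (cube z (r + R)) := measure_mono <| Set.iUnion₂_subset fun i hi => by
        rintro _ ⟨x, hx, rfl⟩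
        show x + p i ∈ _
        rw [add_comm x]
        exact add_mem_cube (Finset.mem_filter.1 hi).2 (hKR hx)

end PointMeasure

section SelfAffine

variable {ι : Type*} [Fintype ι] [DecidableEq ι] (B : Matrix ι ι ℝ)
  (D : Finset (EuclideanSpace ℝ ι))

noncomputable def digitSum (N : ℕ) (f : Fin N → D) : EuclideanSpace ℝ ι :=
  ∑ j : Fin N, toEuclideanLin (B ^ (j : ℕ)) (f j)

theorem digitSum_snoc (N : ℕ) (f : Fin N → D) (d : D) :
    digitSum B D (N + 1) (Fin.snoc f d) = digitSum B D N f + toEuclideanLin (B ^ N) d := by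
  simp [digitSum, Fin.sum_univ_castSucc]

theorem range_digitSum_zero : Set.range (digitSum B D 0) = {0} := by
  simp [digitSum]

theorem range_digitSum_succ (N : ℕ) :
    Set.range (digitSum B D (N + 1)) =
      Set.range (digitSum B D N) + toEuclideanLin (B ^ N) '' D := by
  ext x
  constructor
  · rintro ⟨g, rfl⟩
    rw [← Fin.snoc_init_self g, digitSum_snoc]
    exact Set.add_mem_add ⟨_, rfl⟩ ⟨_, (g (Fin.last N)).2, rfl⟩
  · rintro ⟨_, ⟨f, rfl⟩, _, ⟨d, hd, rfl⟩, rfl⟩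
    exact ⟨Fin.snoc f ⟨d, hd⟩, digitSum_snoc B D N f ⟨d, hd⟩⟩

variable {B D}

theorem digitSum_const_zero (hD0 : (0 : EuclideanSpace ℝ ι) ∈ D) (N : ℕ) :
    digitSum B D N (fun _ => ⟨0, hD0⟩) = 0 := by
  simp [digitSum]

theorem monotone_pointMeasure_digitSum (hD0 : (0 : EuclideanSpace ℝ ι) ∈ D) :
    Monotone fun N => pointMeasure (digitSum B D N) := by
  refine monotone_nat_of_le_succ fun N => Measure.le_iff.2 fun s hs => ?_
  simp only [pointMeasure, Measure.sum_apply _ hs]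
  calc ∑' f, Measure.dirac (digitSum B D N f) s
      = ∑' f, Measure.dirac (digitSum B D (N + 1) (Fin.snoc f ⟨0, hD0⟩)) s := by
        simp [digitSum_snoc]
    _ ≤ _ := ENNReal.tsum_comp_le_tsum_of_injective (Fin.snoc_left_injective _) _

variable {K : Set (EuclideanSpace ℝ ι)}

theorem image_pow_eq_add_range_digitSum (hK : toEuclideanLin B '' K = K + D) (N : ℕ) :
    toEuclideanLin (B ^ N) '' K = K + Set.range (digitSum B D N) := by
  induction N with
  | zero => simp [range_digitSum_zero]
  | succ N ih =>
    rw [range_digitSum_succ, ← add_assoc, ← ih, ← Set.image_add, ← hK, ← Set.image_comp,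
      pow_succ, toLpLin_mul_same]
    rfl

theorem subset_image_pow (hD0 : (0 : EuclideanSpace ℝ ι) ∈ D)
    (hK : toEuclideanLin B '' K = K + D) (N : ℕ) : K ⊆ toEuclideanLin (B ^ N) '' K := by
  rw [image_pow_eq_add_range_digitSum hK]
  exact fun x hx => ⟨x, hx, 0, ⟨_, digitSum_const_zero hD0 N⟩, add_zero x⟩

theorem digitSum_mem_image_pow (h0K : (0 : EuclideanSpace ℝ ι) ∈ K)
    (hK : toEuclideanLin B '' K = K + D) {N : ℕ} (f : Fin N → D) :
    digitSum B D N f ∈ toEuclideanLin (B ^ N) '' K := by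
  rw [image_pow_eq_add_range_digitSum hK]
  exact ⟨0, h0K, _, ⟨f, rfl⟩, zero_add _⟩

theorem zero_mem_of_isExpanding (hB : B.IsExpanding) (hD0 : (0 : EuclideanSpace ℝ ι) ∈ D)
    (hK : toEuclideanLin B '' K = K + D) (hKc : IsCompact K) (hKne : K.Nonempty) :
    (0 : EuclideanSpace ℝ ι) ∈ K := by
  obtain ⟨x, hx⟩ := hKne
  have hmem : ∀ N, toEuclideanLin (B⁻¹ ^ N) x ∈ K := fun N => by
    obtain ⟨y, hy, hyx⟩ := subset_image_pow hD0 hK N hx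
    have hdetN : IsUnit (B ^ N).det := by rw [det_pow]; exact hB.isUnit_det.pow N
    rwa [← hyx, inv_pow', toEuclideanLin_nonsing_inv_apply_apply hdetN]
  have hlim : Tendsto (fun N => toEuclideanLin (B⁻¹ ^ N) x) atTop (𝓝 0) := by
    refine squeeze_zero_norm (fun N => norm_toEuclideanLin_le _ x) ?_
    simpa using (continuous_norm.tendsto 0).comp hB.tendsto_inv_pow |>.mul_const ‖x‖
  exact hKc.isClosed.mem_of_tendsto hlim (.of_forall hmem)

theorem volume_image_pow (hcard : (D.card : ℝ) = |B.det|) (N : ℕ)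
    (S : Set (EuclideanSpace ℝ ι)) :
    volume (toEuclideanLin (B ^ N) '' S) = (D.card : ℝ≥0∞) ^ N * volume S := by
  rw [volume_image_toEuclideanLin, det_pow, abs_pow, ← hcard, ENNReal.ofReal_pow (by positivity),
    ENNReal.ofReal_natCast]

theorem volume_iUnion_translates_digitSum (hcard : (D.card : ℝ) = |B.det|)
    (hK : toEuclideanLin B '' K = K + D) (N : ℕ) :
    volume (⋃ f, (· + digitSum B D N f) '' K) = ∑ f, volume ((· + digitSum B D N f) '' K) := by
  have hunion : ⋃ f, (· + digitSum B D N f) '' K = toEuclideanLin (B ^ N) '' K := by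
    rw [image_pow_eq_add_range_digitSum hK, ← Set.iUnion_add_right_image, Set.biUnion_range]
  simp only [hunion, volume_image_pow hcard, measure_image_add_right, Finset.sum_const,
    Finset.card_univ, Fintype.card_fun, Fintype.card_coe, Fintype.card_fin, nsmul_eq_mul,
    Nat.cast_pow]

end SelfAffine

section BeurlingDensity

variable {n : ℕ}

theorem beurlingUpper_le_of_measure_cube_le (ν : Measure (EuclideanSpace ℝ (Fin n)))
    (C : ℝ≥0∞) (a : ℝ)
    (h : ∀ z, ∀ N > (0 : ℝ), ν (cube z (N / 2)) ≤ C * ENNReal.ofReal ((N + a) ^ n)) :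
    beurlingUpper ν ≤ C := by
  have hratio : Tendsto (fun N : ℝ => ENNReal.ofReal (((N + a) / N) ^ n)) atTop (𝓝 1) := by
    have hlim : Tendsto (fun N : ℝ => ENNReal.ofReal ((1 + a * N⁻¹) ^ n)) atTop (𝓝 1) := by
      simpa using ENNReal.tendsto_ofReal
        ((tendsto_inv_atTop_zero.const_mul a |>.const_add 1).pow n)
    refine hlim.congr' ?_
    filter_upwards [eventually_ne_atTop 0] with N hN
    rw [add_div, div_self hN, div_eq_mul_inv]
  calc beurlingUpper ν ≤ limsup (fun N : ℝ => C * ENNReal.ofReal (((N + a) / N) ^ n)) atTop := by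
        refine limsup_le_limsup ?_
        filter_upwards [eventually_gt_atTop 0] with N hN
        refine iSup_le fun z => ENNReal.div_le_of_le_mul ?_
        rw [mul_assoc, ← ENNReal.ofReal_mul' (by positivity), ← mul_pow,
          div_mul_cancel₀ _ hN.ne']
        exact h z N hN
    _ = C := by simpa using (ENNReal.Tendsto.const_mul hratio (.inl one_ne_zero)).limsup_eq

theorem le_beurlingUpper_of_le_iSup_measure_cube (ν : Measure (EuclideanSpace ℝ (Fin n)))
    (c : ℝ≥0∞) (h : ∀ N > (0 : ℝ), c ≤ ⨆ z, ν (cube z (N / 2)) / ENNReal.ofReal (N ^ n)) :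
    c ≤ beurlingUpper ν :=
  le_limsup_of_frequently_le ((eventually_gt_atTop 0).frequently.mono h)

variable {B : Matrix (Fin n) (Fin n) ℝ} {D : Finset (EuclideanSpace ℝ (Fin n))}
  {K : Set (EuclideanSpace ℝ (Fin n))}

theorem selfAffineMeasure_eq_iSup_pointMeasure :
    selfAffineMeasure B D = ⨆ N, pointMeasure (digitSum B D N) :=
  rfl

theorem beurlingUpper_selfAffineMeasure_le (hD0 : (0 : EuclideanSpace ℝ (Fin n)) ∈ D)
    (hcard : (D.card : ℝ) = |B.det|) (hK : toEuclideanLin B '' K = K + D) (hKc : IsCompact K) :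
    beurlingUpper (selfAffineMeasure B D) ≤ (volume K)⁻¹ := by
  rcases eq_or_ne (volume K) 0 with hK0 | hK0
  · simp [hK0]
  obtain ⟨R, hR, hKR⟩ := hKc.exists_subset_cube
  refine beurlingUpper_le_of_measure_cube_le _ _ (2 * R) fun z N hN => ?_
  rw [selfAffineMeasure_eq_iSup_pointMeasure,
    Measure.iSup_apply_of_monotone (monotone_pointMeasure_digitSum hD0) (measurableSet_cube _ _)]
  refine iSup_le fun M => ?_
  rw [mul_comm, ← div_eq_mul_inv, ENNReal.le_div_iff_mul_le (.inl hK0) (.inl hKc.measure_ne_top)]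
  calc pointMeasure (digitSum B D M) (cube z (N / 2)) * volume K
      ≤ volume (cube z (N / 2 + R)) :=
        pointMeasure_cube_mul_volume_le _ hKc.measure_ne_top hKR
          (volume_iUnion_translates_digitSum hcard hK M) z _
    _ = ENNReal.ofReal ((N + 2 * R) ^ n) := by
        rw [volume_cube z (by positivity), Fintype.card_fin]
        ring_nf

theorem inv_volume_add_image_inv_pow_le (hdet : IsUnit B.det)
    (hD0 : (0 : EuclideanSpace ℝ (Fin n)) ∈ D) (hcard : (D.card : ℝ) = |B.det|)
    (hK : toEuclideanLin B '' K = K + D) (h0K : (0 : EuclideanSpace ℝ (Fin n)) ∈ K)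
    {L : ℝ} (hL : 0 < L) (N : ℕ) :
    (volume (K + toEuclideanLin (B⁻¹ ^ N) '' cube 0 (L / 2)))⁻¹ ≤
      ⨆ z, selfAffineMeasure B D (cube z (L / 2)) / ENNReal.ofReal (L ^ n) := by
  have hdetN : IsUnit (B ^ N).det := by rw [det_pow]; exact hdet.pow N
  have himage : toEuclideanLin (B ^ N) '' K + cube 0 (L / 2) =
      toEuclideanLin (B ^ N) '' (K + toEuclideanLin (B⁻¹ ^ N) '' cube 0 (L / 2)) := by
    simp only [Set.image_add, Set.image_image, inv_pow',
      toEuclideanLin_apply_nonsing_inv_apply hdetN, Set.image_id']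
  have hpoints : (D.card : ℝ≥0∞) ^ N * ENNReal.ofReal (L ^ n) ≤
      (⨆ z, pointMeasure (digitSum B D N) (cube z (L / 2))) *
        ((D.card : ℝ≥0∞) ^ N * volume (K + toEuclideanLin (B⁻¹ ^ N) '' cube 0 (L / 2))) := by
    have hcount := card_mul_volume_cube_le (digitSum B D N) (digitSum_mem_image_pow h0K hK)
      (r := L / 2) (by positivity)
    rwa [himage, volume_image_pow hcard, volume_cube _ (by positivity), Fintype.card_fin,
      Fintype.card_fun, Fintype.card_coe, Fintype.card_fin, Nat.cast_pow,
      mul_div_cancel₀ _ two_ne_zero] at hcount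
  have hdigit : ⨆ z, pointMeasure (digitSum B D N) (cube z (L / 2)) ≤
      ⨆ z, selfAffineMeasure B D (cube z (L / 2)) := by
    rw [selfAffineMeasure_eq_iSup_pointMeasure]
    exact iSup_mono fun z => Measure.le_iff'.1 (le_iSup (pointMeasure <| digitSum B D ·) N) _
  have hq : (D.card : ℝ≥0∞) ^ N ≠ 0 := pow_ne_zero _ (by simpa using D.card_ne_zero_of_mem hD0)
  rw [← ENNReal.iSup_div]
  refine ENNReal.inv_le_div_of_le_mul (by positivity) ENNReal.ofReal_ne_top ?_
  rw [← ENNReal.mul_le_mul_iff_right hq (by simp), mul_left_comm]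
  exact hpoints.trans (mul_le_mul_left hdigit _)

theorem inv_volume_le_beurlingUpper_selfAffineMeasure (hB : B.IsExpanding)
    (hD0 : (0 : EuclideanSpace ℝ (Fin n)) ∈ D) (hcard : (D.card : ℝ) = |B.det|)
    (hK : toEuclideanLin B '' K = K + D) (hKc : IsCompact K) (hKne : K.Nonempty) :
    (volume K)⁻¹ ≤ beurlingUpper (selfAffineMeasure B D) := by
  have h0K := zero_mem_of_isExpanding hB hD0 hK hKc hKne
  refine le_beurlingUpper_of_le_iSup_measure_cube _ _ fun L hL => ?_
  have hshrink : ⨅ N, volume (K + toEuclideanLin (B⁻¹ ^ N) '' cube 0 (L / 2)) ≤ volume K :=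
    iInf_measure_add_le_of_forall_subset_closedBall _ hKc fun δ hδ =>
      hB.exists_image_inv_pow_subset_closedBall (isCompact_cube _ _).isBounded hδ
  calc (volume K)⁻¹ ≤ (⨅ N, volume (K + toEuclideanLin (B⁻¹ ^ N) '' cube 0 (L / 2)))⁻¹ :=
        ENNReal.inv_le_inv.2 hshrink
    _ = ⨆ N, (volume (K + toEuclideanLin (B⁻¹ ^ N) '' cube 0 (L / 2)))⁻¹ := ENNReal.inv_iInf _
    _ ≤ _ := iSup_le (inv_volume_add_image_inv_pow_le hB.isUnit_det hD0 hcard hK h0K hL)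

end BeurlingDensity

theorem lebesgue_measure_eq_inv_upper_beurling_general {n : ℕ} (B : Matrix (Fin n) (Fin n) ℝ)
    (hB : ∀ μ ∈ spectrum ℂ (B.map (algebraMap ℝ ℂ)), 1 < ‖μ‖)
    (D : Finset (EuclideanSpace ℝ (Fin n))) (hD0 : (0 : EuclideanSpace ℝ (Fin n)) ∈ D)
    (hcard : (D.card : ℝ) = |B.det|)
    (K : Set (EuclideanSpace ℝ (Fin n))) (hKc : IsCompact K) (hKne : K.Nonempty)
    (hK : Matrix.toEuclideanLin B '' K = ⋃ d ∈ D, (fun x => x + d) '' K) :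
    volume K = (beurlingUpper (selfAffineMeasure B D))⁻¹ := by
  replace hK : toEuclideanLin B '' K = K + D := hK.trans (Set.iUnion_add_right_image ..)
  rw [le_antisymm (beurlingUpper_selfAffineMeasure_le hD0 hcard hK hKc)
    (inv_volume_le_beurlingUpper_selfAffineMeasure hB hD0 hcard hK hKc hKne), inv_inv]

/-- **Theorem (Lebesgue measure of self-affine sets).** If `B` is an expanding real `n×n` matrix,
`D ⊆ ℝⁿ` is finite with `0 ∈ D` and `card D = |det B| ∈ ℤ`, and `K = K(B,D)` is the self-affine
set (the unique nonempty compact set with `B·K = ⋃_{d∈D} (K+d)`), then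
`|K(B,D)| = (D⁺(μ))⁻¹` as an equality in `[0,∞]`. -/
theorem lebesgue_measure_eq_inv_upper_beurling {n : ℕ} (B : Matrix (Fin n) (Fin n) ℝ)
    (hB : ∀ μ ∈ spectrum ℂ (B.map (algebraMap ℝ ℂ)), 1 < ‖μ‖)
    (m : ℤ) (hm : |B.det| = (m : ℝ))
    (D : Finset (EuclideanSpace ℝ (Fin n))) (hD0 : (0 : EuclideanSpace ℝ (Fin n)) ∈ D)
    (hcard : (D.card : ℝ) = |B.det|)
    (K : Set (EuclideanSpace ℝ (Fin n))) (hKc : IsCompact K) (hKne : K.Nonempty)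
    (hK : Matrix.toEuclideanLin B '' K = ⋃ d ∈ D, (fun x => x + d) '' K) :
    volume K = (beurlingUpper (selfAffineMeasure B D))⁻¹ :=
  lebesgue_measure_eq_inv_upper_beurling_general B hB D hD0 hcard K hKc hKne hK
end

section
/- Let Λ ⊂ ℝⁿ be a countable discrete set and let C be an invertible n×n real matrix. Then |det C| · D⁺(CΛ) = D⁺(Λ), where CΛ = {Cλ : λ ∈ Λ}. -/
/-!
Cut space into the half-open lattice cubes ("tiles") of side `R`. For a linear automorphism `A`,
the tiles meeting `A(Q_N(z))` cover it, so `μ(A(Q_N(z)))` is at most their number times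
`sup_w μ(Q_R(w))`. Since `A⁻¹` is Lipschitz for the sup norm, every such tile lies in
`A(Q_{N+cR}(z))`, and comparing volumes bounds their number by `|det A| (N + cR)ⁿ / Rⁿ`.
Letting `N → ∞` and then `R → ∞` gives `D⁺(A⁻¹_* μ) ≤ |det A| D⁺(μ)` for every measure `μ`;
applied to `C` and to `C⁻¹` this yields both inequalities, and the counting measure of `CΛ` is
the push-forward of that of `Λ`.
-/

open MeasureTheory Filter
open scoped ENNReal

/-- The counting measure `Σ_{λ ∈ Λ} δ_λ` of a subset `Λ ⊆ ℝⁿ`. -/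
noncomputable def countingMeasure {n : ℕ} (Λ : Set (EuclideanSpace ℝ (Fin n))) :
    Measure (EuclideanSpace ℝ (Fin n)) :=
  Measure.sum (fun x : Λ => Measure.dirac (x : EuclideanSpace ℝ (Fin n)))

namespace BeurlingDensity

open Set WithLp Topology

variable {n : ℕ}

local notation "E" => EuclideanSpace ℝ (Fin n)

theorem volume_setOf_forall_apply_mem {ι : Type*} [Fintype ι] (I : ι → Set ℝ) :
    volume {x : EuclideanSpace ℝ ι | ∀ i, x i ∈ I i} = ∏ i, volume (I i) := by
  rw [← volume_pi_pi]
  convert (EuclideanSpace.volume_preserving_symm_measurableEquiv_toLp ι).measure_preimage_equiv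
    (univ.pi I) using 2
  ext x
  simp

def cube (z : E) (s : ℝ) : Set E := {y | ∀ i, |y i - z i| ≤ s / 2}

theorem volume_cube (z : E) {s : ℝ} (hs : 0 ≤ s) :
    volume (cube z s) = ENNReal.ofReal (s ^ n) := by
  have : cube z s = {y : E | ∀ i, y i ∈ Icc (z i - s / 2) (z i + s / 2)} := by
    ext y; simp only [cube, mem_ofPred_eq, mem_Icc, abs_sub_le_iff]
    refine forall_congr' fun i => ?_
    constructor <;> rintro ⟨h₁, h₂⟩ <;> constructor <;> linarith
  rw [this, volume_setOf_forall_apply_mem]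
  simp [Real.volume_Icc, ENNReal.ofReal_pow hs]

theorem mem_cube_iff {z y : E} {s : ℝ} (hs : 0 ≤ s) :
    y ∈ cube z s ↔ ‖ofLp (y - z)‖ ≤ s / 2 := by
  rw [pi_norm_le_iff_of_nonneg (by positivity)]
  simp [cube, Real.norm_eq_abs]

def tile (R : ℝ) (k : Fin n → ℤ) : Set E := {x | ∀ i, ⌊x i / R⌋ = k i}

theorem mem_tile_iff {R : ℝ} (hR : 0 < R) {k : Fin n → ℤ} {x : E} :
    x ∈ tile R k ↔ ∀ i, x i ∈ Ico (R * k i) (R * k i + R) := by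
  refine forall_congr' fun i => ?_
  rw [Int.floor_eq_iff, le_div_iff₀ hR, div_lt_iff₀ hR, mem_Ico]
  constructor <;> rintro ⟨h₁, h₂⟩ <;> constructor <;> linarith

theorem volume_tile {R : ℝ} (hR : 0 < R) (k : Fin n → ℤ) :
    volume (tile R k) = ENNReal.ofReal (R ^ n) := by
  have : tile R k = {x : E | ∀ i, x i ∈ Ico (R * k i) (R * k i + R)} := by
    ext x; exact mem_tile_iff hR
  rw [this, volume_setOf_forall_apply_mem]
  simp [Real.volume_Ico, ENNReal.ofReal_pow hR.le]

theorem measurableSet_tile (R : ℝ) (k : Fin n → ℤ) : MeasurableSet (tile R k) := by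
  simp only [tile, ofPred_forall]
  exact MeasurableSet.iInter fun i => measurableSet_eq_fun (by fun_prop) measurable_const

theorem pairwise_disjoint_tile (R : ℝ) :
    Pairwise (Function.onFun Disjoint (tile R : (Fin n → ℤ) → Set E)) :=
  fun _ _ hkk' => disjoint_left.mpr fun _ hk hk' =>
    hkk' (funext fun i => (hk i).symm.trans (hk' i))

theorem encard_mul_le_volume {R : ℝ} (hR : 0 < R) {S : Set (Fin n → ℤ)} {s : Set E}
    (hS : ∀ k ∈ S, tile R k ⊆ s) : S.encard * ENNReal.ofReal (R ^ n) ≤ volume s :=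
  calc S.encard * ENNReal.ofReal (R ^ n) = ∑' k : S, volume (tile R (k : Fin n → ℤ)) := by
        simp only [volume_tile hR, ENNReal.tsum_const]; rfl
    _ = volume (⋃ k ∈ S, tile R k) :=
        (measure_biUnion S.to_countable ((pairwise_disjoint_tile R).set_pairwise S)
          fun k _ => measurableSet_tile R k).symm
    _ ≤ volume s := measure_mono (iUnion₂_subset hS)

theorem tile_subset_cube {R : ℝ} (hR : 0 < R) (k : Fin n → ℤ) :
    tile R k ⊆ cube (toLp 2 fun i => R * k i + R / 2) R := fun x hx i => by
  obtain ⟨h₁, h₂⟩ := (mem_tile_iff hR).mp hx i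
  rw [PiLp.toLp_apply, abs_le]
  constructor <;> linarith

theorem norm_ofLp_sub_le_of_mem_tile {R : ℝ} (hR : 0 < R) {k : Fin n → ℤ} {x y : E}
    (hx : x ∈ tile R k) (hy : y ∈ tile R k) : ‖ofLp (x - y)‖ ≤ R := by
  refine (pi_norm_le_iff_of_nonneg hR.le).mpr fun i => ?_
  obtain ⟨hx₁, hx₂⟩ := (mem_tile_iff hR).mp hx i
  obtain ⟨hy₁, hy₂⟩ := (mem_tile_iff hR).mp hy i
  rw [ofLp_sub, Pi.sub_apply, Real.norm_eq_abs, abs_le]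
  constructor <;> linarith

theorem exists_norm_ofLp_map_le {ι : Type*} [Fintype ι]
    (A : EuclideanSpace ℝ ι →ₗ[ℝ] EuclideanSpace ℝ ι) :
    ∃ c, 0 ≤ c ∧ ∀ x, ‖ofLp (A x)‖ ≤ c * ‖ofLp x‖ := by
  let L := LinearMap.toContinuousLinearMap ((WithLp.linearEquiv 2 ℝ (ι → ℝ)).conj A)
  refine ⟨‖L‖, norm_nonneg L, fun x => ?_⟩
  simpa [L, LinearEquiv.conj_apply] using L.le_opNorm (ofLp x)

theorem tile_subset_image_cube {A : E ≃ₗ[ℝ] E} {c R N : ℝ} (hR : 0 < R) (hN : 0 ≤ N)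
    (hc : 0 ≤ c) (hA : ∀ x, ‖ofLp (A.symm x)‖ ≤ c * ‖ofLp x‖) {z : E} {k : Fin n → ℤ}
    (hk : (tile R k ∩ A '' cube z N).Nonempty) :
    tile R k ⊆ A '' cube z (N + 2 * c * R) := by
  obtain ⟨_, hy₀, x₀, hx₀, rfl⟩ := hk
  intro y hy
  refine ⟨x₀ + A.symm (y - A x₀), ?_, by simp⟩
  rw [mem_cube_iff hN] at hx₀
  rw [mem_cube_iff (by positivity)]
  calc ‖ofLp (x₀ + A.symm (y - A x₀) - z)‖
      ≤ ‖ofLp (x₀ - z)‖ + ‖ofLp (A.symm (y - A x₀))‖ := by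
        rw [add_sub_right_comm, ofLp_add]; exact norm_add_le _ _
    _ ≤ N / 2 + c * R := by
        gcongr
        exact (hA _).trans (by gcongr; exact norm_ofLp_sub_le_of_mem_tile hR hy hy₀)
    _ = (N + 2 * c * R) / 2 := by ring

theorem exists_measure_image_cube_le (A : E ≃ₗ[ℝ] E) :
    ∃ c, ∀ (μ : Measure E) {R N : ℝ}, 0 < R → 0 ≤ N → ∀ z,
      μ (A '' cube z N) ≤ ENNReal.ofReal (|LinearMap.det (A : E →ₗ[ℝ] E)| * (N + c * R) ^ n) *
        ⨆ w, μ (cube w R) / ENNReal.ofReal (R ^ n) := by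
  obtain ⟨c, hc, hA⟩ := exists_norm_ofLp_map_le (A.symm : E →ₗ[ℝ] E)
  refine ⟨2 * c, fun μ R N hR hN z => ?_⟩
  set S := {k | (tile R k ∩ A '' cube z N).Nonempty}
  set V := ENNReal.ofReal (|LinearMap.det (A : E →ₗ[ℝ] E)| * (N + 2 * c * R) ^ n)
  set b := ENNReal.ofReal (R ^ n)
  have hcover : A '' cube z N ⊆ ⋃ k ∈ S, cube (toLp 2 fun i => R * k i + R / 2) R :=
    fun y hy => mem_biUnion (x := fun i => ⌊y i / R⌋) ⟨y, fun _ => rfl, hy⟩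
      (tile_subset_cube hR _ fun _ => rfl)
  have hcount : S.encard * b ≤ V := by
    refine (encard_mul_le_volume hR fun k hk => tile_subset_image_cube hR hN hc hA hk).trans_eq ?_
    rw [← LinearEquiv.coe_coe, Measure.addHaar_image_linearMap, volume_cube _ (by positivity),
      ← ENNReal.ofReal_mul (abs_nonneg _)]
  calc μ (A '' cube z N)
      ≤ ∑' k : S, μ (cube (toLp 2 fun i => R * (k : Fin n → ℤ) i + R / 2) R) :=
        (measure_mono hcover).trans (measure_biUnion_le _ S.to_countable _)
    _ ≤ ∑' _ : S, ⨆ w, μ (cube w R) := ENNReal.tsum_le_tsum fun _ => le_iSup (μ ∘ (cube · R)) _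
    _ = S.encard * ⨆ w, μ (cube w R) := ENNReal.tsum_const _
    _ ≤ V / b * ⨆ w, μ (cube w R) := by
        gcongr
        exact (ENNReal.le_div_iff_mul_le (.inl (by positivity)) (.inl ENNReal.ofReal_ne_top)).mpr
          hcount
    _ = V * ⨆ w, μ (cube w R) / b := by
        rw [← ENNReal.iSup_div, div_eq_mul_inv, div_eq_mul_inv]; ring

theorem tendsto_add_pow_div_pow (a : ℝ) (n : ℕ) :
    Tendsto (fun N : ℝ => (N + a) ^ n / N ^ n) atTop (𝓝 1) := by
  have h : Tendsto (fun N : ℝ => (1 + a / N) ^ n) atTop (𝓝 1) := by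
    simpa using ((tendsto_const_nhds (x := (1 : ℝ))).add
      ((tendsto_const_nhds (x := a)).div_atTop tendsto_id)).pow n
  refine h.congr' ?_
  filter_upwards [eventually_gt_atTop 0] with N hN
  rw [← div_pow, add_div, div_self hN.ne']

theorem limsup_measure_image_cube_le (A : E ≃ₗ[ℝ] E) (μ : Measure E) :
    limsup (fun N : ℝ => ⨆ z, μ (A '' cube z N) / ENNReal.ofReal (N ^ n)) atTop ≤
      ENNReal.ofReal |LinearMap.det (A : E →ₗ[ℝ] E)| * beurlingUpper μ := by
  obtain ⟨c, hA⟩ := exists_measure_image_cube_le A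
  set a := |LinearMap.det (A : E →ₗ[ℝ] E)|
  set g : ℝ → ℝ≥0∞ := fun R => ⨆ w, μ (cube w R) / ENNReal.ofReal (R ^ n)
  have hR : ∀ R > 0,
      limsup (fun N : ℝ => ⨆ z, μ (A '' cube z N) / ENNReal.ofReal (N ^ n)) atTop ≤
        ENNReal.ofReal a * g R := by
    intro R hR
    have hbound : ∀ᶠ N : ℝ in atTop, ⨆ z, μ (A '' cube z N) / ENNReal.ofReal (N ^ n) ≤
        ENNReal.ofReal (a * ((N + c * R) ^ n / N ^ n)) * g R := by
      filter_upwards [eventually_gt_atTop 0] with N hN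
      refine iSup_le fun z => (ENNReal.div_le_div_right (hA μ hR hN.le z) _).trans_eq ?_
      rw [← mul_div_assoc a, ENNReal.ofReal_div_of_pos (by positivity)]
      simp only [g, div_eq_mul_inv]
      ring
    have htend : Tendsto (fun N : ℝ => ENNReal.ofReal (a * ((N + c * R) ^ n / N ^ n)) * g R) atTop
        (𝓝 (ENNReal.ofReal a * g R)) := by
      refine ENNReal.Tendsto.mul_const (ENNReal.tendsto_ofReal ?_) (.inl ?_)
      · simpa using (tendsto_add_pow_div_pow (c * R) n).const_mul a
      · exact ENNReal.ofReal_pos.mpr (abs_pos.mpr A.isUnit_det'.ne_zero) |>.ne'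
    exact (limsup_le_limsup hbound).trans_eq htend.limsup_eq
  calc _ ≤ liminf (fun R => ENNReal.ofReal a * g R) atTop :=
        le_liminf_of_le (by isBoundedDefault) ((eventually_gt_atTop 0).mono hR)
    _ ≤ limsup (fun R => ENNReal.ofReal a * g R) atTop := liminf_le_limsup
    _ = ENNReal.ofReal a * beurlingUpper μ :=
        ENNReal.limsup_const_mul_of_ne_top ENNReal.ofReal_ne_top

theorem beurlingUpper_map_le (T : E ≃ₗ[ℝ] E) (μ : Measure E) :
    beurlingUpper (μ.map T) ≤
      ENNReal.ofReal |LinearMap.det (T.symm : E →ₗ[ℝ] E)| * beurlingUpper μ := by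
  have hmap : ∀ s, μ.map T s = μ (T.symm '' s) := fun s => by
    rw [T.image_symm_eq_preimage]
    exact T.toContinuousLinearEquiv.toHomeomorph.measurableEmbedding.map_apply μ s
  unfold beurlingUpper
  simp_rw [hmap]
  exact limsup_measure_image_cube_le T.symm μ

theorem beurlingUpper_map (T : E ≃ₗ[ℝ] E) (μ : Measure E) :
    ENNReal.ofReal |LinearMap.det (T : E →ₗ[ℝ] E)| * beurlingUpper (μ.map T) =
      beurlingUpper μ := by
  have hdet : ENNReal.ofReal |LinearMap.det (T : E →ₗ[ℝ] E)| *
      ENNReal.ofReal |LinearMap.det (T.symm : E →ₗ[ℝ] E)| = 1 := by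
    rw [← ENNReal.ofReal_mul (abs_nonneg _), ← abs_mul, T.det_mul_det_symm, abs_one,
      ENNReal.ofReal_one]
  refine le_antisymm ?_ ?_
  · calc _ ≤ ENNReal.ofReal |LinearMap.det (T : E →ₗ[ℝ] E)| *
          (ENNReal.ofReal |LinearMap.det (T.symm : E →ₗ[ℝ] E)| * beurlingUpper μ) := by
          gcongr; exact beurlingUpper_map_le T μ
      _ = beurlingUpper μ := by rw [← mul_assoc, hdet, one_mul]
  · calc beurlingUpper μ = beurlingUpper ((μ.map T).map T.symm) := by
          congr
          exact (T.toContinuousLinearEquiv.toHomeomorph.toMeasurableEquiv.map_symm_map).symm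
      _ ≤ _ := beurlingUpper_map_le T.symm _

theorem countingMeasure_image {f : E → E} (hf : Measurable f) (hinj : Function.Injective f)
    (Λ : Set E) : countingMeasure (f '' Λ) = (countingMeasure Λ).map f := by
  rw [countingMeasure, countingMeasure, Measure.map_sum hf.aemeasurable,
    ← Measure.sum_comp_equiv (Equiv.Set.image f Λ hinj)]
  congr 1
  funext x
  simp only [Function.comp_apply, Equiv.Set.image_apply, Measure.map_dirac' hf]

end BeurlingDensity

open BeurlingDensity in
theorem det_mul_upperBeurling_image_general {n : ℕ} (Λ : Set (EuclideanSpace ℝ (Fin n)))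
    (C : Matrix (Fin n) (Fin n) ℝ) (hC : C.det ≠ 0) :
    ENNReal.ofReal |C.det| *
        beurlingUpper (countingMeasure (Matrix.toEuclideanLin C '' Λ)) =
      beurlingUpper (countingMeasure Λ) := by
  have hdet : LinearMap.det (Matrix.toEuclideanLin C) = C.det := LinearMap.det_toLpLin 2 C
  let T := LinearMap.equivOfDetNeZero _ (hdet ▸ hC)
  rw [countingMeasure_image (Matrix.toEuclideanLin C).continuous_of_finiteDimensional.measurable
    T.injective, ← hdet]
  exact beurlingUpper_map T _

/-- **Proposition.** For a countable discrete set `Λ ⊆ ℝⁿ` and an invertible real `n×n` matrix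
`C`, one has `|det C| · D⁺(CΛ) = D⁺(Λ)`. -/
theorem det_mul_upperBeurling_image {n : ℕ} (Λ : Set (EuclideanSpace ℝ (Fin n)))
    (hΛc : Λ.Countable) (hΛd : DiscreteTopology Λ)
    (C : Matrix (Fin n) (Fin n) ℝ) (hC : C.det ≠ 0) :
    ENNReal.ofReal |C.det| *
        beurlingUpper (countingMeasure (Matrix.toEuclideanLin C '' Λ)) =
      beurlingUpper (countingMeasure Λ) :=
  det_mul_upperBeurling_image_general Λ C hC
end

section
/- Let μ be a positive Borel measure on ℝⁿ, let σ be a Borel probability measure on ℝⁿ, and let s > 0. Then the upper s-densities of μ∗σ and of μ coincide: E_s⁺(μ∗σ) = E_s⁺(μ). -/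
/-! Translation preserves compact convex sets and their diameters, so averaging over the
translates by `σ` passes every bound `μ U ≤ C (diam U)^s` for large compact convex `U` on to
`μ ∗ σ`. Tonelli applies because a finite upper density makes `μ` finite on compact sets.
Conversely, if `σ` gives mass `c` to the ball of radius `R`, then `c μ(U) ≤ (μ ∗ σ)(U_R)` for
the closed `R`-neighbourhood `U_R` of `U`, a compact convex set of diameter at most
`(1 + 2R/r) diam U` once `diam U ≥ r`. Letting `r → ∞` gives `c E_s⁺(μ) ≤ E_s⁺(μ ∗ σ)`,
and `c → 1` as `R → ∞`. -/

open MeasureTheory Filter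
open scoped ENNReal

/-- The upper `s`-density of a positive Borel measure on ℝⁿ:
`E_s⁺(ν) = limsup_{r→∞} sup { ν(U)/(diam U)^s : U compact convex, diam U ≥ r }`. -/
noncomputable def upperSDensity {n : ℕ} (s : ℝ)
    (ν : Measure (EuclideanSpace ℝ (Fin n))) : ℝ≥0∞ :=
  Filter.limsup (fun r : ℝ =>
    ⨆ (U : Set (EuclideanSpace ℝ (Fin n))) (_ : IsCompact U) (_ : Convex ℝ U)
      (_ : r ≤ Metric.diam U), ν U / EMetric.diam U ^ s) Filter.atTop

open Metric Set Topology
open scoped Pointwise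

section Convolution

variable {G : Type*} [AddCommMonoid G] [MeasurableSpace G] [MeasurableAdd₂ G]

theorem MeasureTheory.Measure.mul_le_conv_apply (μ σ : Measure G) [SFinite σ] {U K V : Set G}
    (h : U + K ⊆ V) : μ U * σ K ≤ (μ.conv σ) V :=
  calc μ U * σ K = μ.prod σ (U ×ˢ K) := (Measure.prod_prod U K).symm
    _ ≤ μ.prod σ ((fun p : G × G => p.1 + p.2) ⁻¹' V) :=
      measure_mono fun _ hp => h (add_mem_add hp.1 hp.2)
    _ ≤ (μ.conv σ) V := Measure.le_map_apply (by fun_prop) V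

theorem MeasureTheory.Measure.conv_apply_le (μ σ : Measure G) [SFinite μ] [SFinite σ]
    {V : Set G} (hV : MeasurableSet V) {a : ℝ≥0∞} (h : ∀ y, μ ((y + ·) ⁻¹' V) ≤ a) :
    (μ.conv σ) V ≤ a * σ univ := by
  rw [Measure.conv_comm, Measure.conv, Measure.map_apply (by fun_prop) hV,
    Measure.prod_apply (measurable_add hV), ← lintegral_const]
  exact lintegral_mono fun y => h y

end Convolution

theorem Metric.diam_cthickening_le_mul {α : Type*} [PseudoMetricSpace α] {U : Set α} {r R : ℝ}
    (hr : 0 < r) (hrU : r ≤ diam U) (hR : 0 ≤ R) :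
    diam (cthickening R U) ≤ (1 + 2 * R / r) * diam U := by
  have : 2 * R ≤ 2 * R / r * diam U := by
    calc 2 * R = 2 * R / r * r := (div_mul_cancel₀ _ hr.ne').symm
      _ ≤ 2 * R / r * diam U := by gcongr
  linarith [diam_cthickening_le U hR]

theorem Metric.ediam_cthickening_le_mul {α : Type*} [PseudoMetricSpace α] {U : Set α} {r R : ℝ}
    (hU : Bornology.IsBounded U) (hr : 0 < r) (hrU : r ≤ diam U) (hR : 0 ≤ R) :
    ediam (cthickening R U) ≤ ENNReal.ofReal (1 + 2 * R / r) * ediam U := by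
  have hV : Bornology.IsBounded (cthickening R U) := hU.cthickening
  rw [← ENNReal.ofReal_toReal hV.ediam_ne_top, ← ENNReal.ofReal_toReal hU.ediam_ne_top,
    ← ENNReal.ofReal_mul (by positivity)]
  exact ENNReal.ofReal_le_ofReal (diam_cthickening_le_mul hr hrU hR)

theorem Metric.ediam_ne_zero_of_diam_pos {α : Type*} [PseudoMetricSpace α] {U : Set α}
    (h : 0 < diam U) : ediam U ≠ 0 :=
  fun h0 => by simp [diam, h0] at h

theorem tendsto_ofReal_one_add_div_rpow (a s : ℝ) :
    Tendsto (fun r : ℝ => ENNReal.ofReal (1 + a / r) ^ s) atTop (𝓝 1) := by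
  have h : Tendsto (fun r : ℝ => ENNReal.ofReal (1 + a / r)) atTop (𝓝 1) := by
    simpa using ENNReal.tendsto_ofReal
      ((tendsto_const_nhds (x := (1 : ℝ))).add (tendsto_const_nhds.div_atTop tendsto_id))
  simpa [Function.comp_def] using (ENNReal.continuous_rpow_const.tendsto 1).comp h

section UpperSDensity

variable {n : ℕ} {s : ℝ}

theorem eventually_measure_le_of_upperSDensity_lt {ν : Measure (EuclideanSpace ℝ (Fin n))}
    {C : ℝ≥0∞} (h : upperSDensity s ν < C) :
    ∀ᶠ r in atTop, ∀ U : Set (EuclideanSpace ℝ (Fin n)), IsCompact U → Convex ℝ U →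
      r ≤ diam U → ν U ≤ C * ediam U ^ s := by
  filter_upwards [eventually_lt_of_limsup_lt h, eventually_gt_atTop 0]
    with r hr hr0 U hU hUc hrU
  have hU0 : ediam U ≠ 0 := ediam_ne_zero_of_diam_pos (hr0.trans_le hrU)
  have hUtop : ediam U ≠ ⊤ := hU.isBounded.ediam_ne_top
  rw [← ENNReal.div_le_iff (ENNReal.rpow_pos (pos_iff_ne_zero.2 hU0) hUtop).ne'
    (ENNReal.rpow_ne_top_of_ne_zero hU0 hUtop)]
  refine le_trans ?_ hr.le
  exact le_iSup_of_le U <| le_iSup_of_le hU <| le_iSup_of_le hUc <| le_iSup_of_le hrU le_rfl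

theorem upperSDensity_le_of_eventually_measure_le {ν : Measure (EuclideanSpace ℝ (Fin n))}
    {f : ℝ → ℝ≥0∞} {L : ℝ≥0∞} (hf : Tendsto f atTop (𝓝 L))
    (h : ∀ᶠ r in atTop, ∀ U : Set (EuclideanSpace ℝ (Fin n)), IsCompact U →
      Convex ℝ U → r ≤ diam U → ν U ≤ f r * ediam U ^ s) :
    upperSDensity s ν ≤ L := by
  rw [← hf.limsup_eq]
  refine limsup_le_limsup (h.mono fun r hr => ?_)
  exact iSup_le fun U => iSup_le fun hU => iSup_le fun hUc => iSup_le fun hrU =>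
    ENNReal.div_le_of_le_mul (hr U hU hUc hrU)

theorem upperSDensity_of_dim_zero (ν : Measure (EuclideanSpace ℝ (Fin 0))) :
    upperSDensity s ν = 0 := by
  refine nonpos_iff_eq_zero.mp <| upperSDensity_le_of_eventually_measure_le
    (f := fun _ => 0) tendsto_const_nhds ?_
  filter_upwards [eventually_gt_atTop 0] with r hr U _ _ hrU
  rw [diam_subsingleton (subsingleton_of_subsingleton)] at hrU
  linarith

theorem isFiniteMeasureOnCompacts_of_upperSDensity_ne_top (hn : 0 < n)
    {ν : Measure (EuclideanSpace ℝ (Fin n))} (h : upperSDensity s ν ≠ ⊤) :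
    IsFiniteMeasureOnCompacts ν := by
  have : Nonempty (Fin n) := ⟨⟨0, hn⟩⟩
  obtain ⟨r, hbound, hr⟩ := ((eventually_measure_le_of_upperSDensity_lt
    (ENNReal.lt_add_right h one_ne_zero)).and (eventually_gt_atTop 0)).exists
  refine ⟨fun K hK => ?_⟩
  obtain ⟨ρ, hKρ⟩ := hK.isBounded.subset_closedBall 0
  set B := closedBall (0 : EuclideanSpace ℝ (Fin n)) (max ρ r)
  have hB : IsCompact B := isCompact_closedBall _ _
  have hrB : r ≤ diam B := by
    rw [diam_closedBall_eq _ (le_max_of_le_right hr.le)]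
    linarith [le_max_right ρ r]
  calc ν K ≤ ν B := measure_mono (hKρ.trans (closedBall_subset_closedBall (le_max_left _ _)))
    _ ≤ (upperSDensity s ν + 1) * ediam B ^ s := hbound B hB (convex_closedBall _ _) hrB
    _ < ⊤ := ENNReal.mul_lt_top (by simpa using h.lt_top) <|
      (ENNReal.rpow_ne_top_of_ne_zero (ediam_ne_zero_of_diam_pos (hr.trans_le hrB))
        hB.isBounded.ediam_ne_top).lt_top

theorem upperSDensity_conv_le (hn : 0 < n) (μ σ : Measure (EuclideanSpace ℝ (Fin n)))
    [IsProbabilityMeasure σ] : upperSDensity s (μ.conv σ) ≤ upperSDensity s μ := by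
  refine le_of_forall_gt_imp_ge_of_dense fun C hC => ?_
  have := isFiniteMeasureOnCompacts_of_upperSDensity_ne_top hn (hC.trans_le le_top).ne
  refine upperSDensity_le_of_eventually_measure_le tendsto_const_nhds ?_
  filter_upwards [eventually_measure_le_of_upperSDensity_lt hC] with r hbound U hU hUc hrU
  rw [← mul_one (C * _), ← measure_univ (μ := σ)]
  refine μ.conv_apply_le σ hU.measurableSet fun y => ?_
  let τ := IsometryEquiv.addLeft y
  have := hbound (τ ⁻¹' U) (τ.toHomeomorph.isCompact_preimage.2 hU)
    (hUc.translate_preimage_right y) (by rwa [τ.diam_preimage])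
  rw [τ.ediam_preimage] at this
  exact this

theorem measure_mul_measure_closedBall_le_of_conv_le (hs : 0 ≤ s)
    (μ σ : Measure (EuclideanSpace ℝ (Fin n))) [SFinite σ] {C : ℝ≥0∞} {r R : ℝ}
    (hr : 0 < r) (hR : 0 ≤ R)
    (hconv : ∀ V : Set (EuclideanSpace ℝ (Fin n)), IsCompact V → Convex ℝ V →
      r ≤ diam V → (μ.conv σ) V ≤ C * ediam V ^ s)
    {U : Set (EuclideanSpace ℝ (Fin n))} (hU : IsCompact U) (hUc : Convex ℝ U)
    (hrU : r ≤ diam U) :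
    μ U * σ (closedBall 0 R) ≤ C * ENNReal.ofReal (1 + 2 * R / r) ^ s * ediam U ^ s := by
  have hV : IsCompact (cthickening R U) := hU.cthickening
  calc μ U * σ (closedBall 0 R) ≤ (μ.conv σ) (cthickening R U) :=
        μ.mul_le_conv_apply σ (hU.add_closedBall_zero hR).le
    _ ≤ C * ediam (cthickening R U) ^ s :=
        hconv _ hV (hUc.cthickening R)
          (hrU.trans (diam_mono (self_subset_cthickening U) hV.isBounded))
    _ ≤ C * (ENNReal.ofReal (1 + 2 * R / r) * ediam U) ^ s := by
        gcongr
        exact ediam_cthickening_le_mul hU.isBounded hr hrU hR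
    _ = C * ENNReal.ofReal (1 + 2 * R / r) ^ s * ediam U ^ s := by
        rw [ENNReal.mul_rpow_of_nonneg _ _ hs, mul_assoc]

theorem upperSDensity_mul_measure_closedBall_le (hs : 0 < s)
    (μ σ : Measure (EuclideanSpace ℝ (Fin n))) [IsFiniteMeasure σ] {R : ℝ} (hR : 0 ≤ R) :
    upperSDensity s μ * σ (closedBall 0 R) ≤ upperSDensity s (μ.conv σ) := by
  set c := σ (closedBall 0 R)
  rcases eq_or_ne c 0 with hc | hc
  · simp [hc]
  have hc_top : c ≠ ⊤ := measure_ne_top σ _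
  refine le_of_forall_gt_imp_ge_of_dense fun C hC => ?_
  have hlim : Tendsto (fun r : ℝ => C * ENNReal.ofReal (1 + 2 * R / r) ^ s / c) atTop
      (𝓝 (C / c)) := by
    have := ENNReal.Tendsto.const_mul (tendsto_ofReal_one_add_div_rpow (2 * R) s)
      (Or.inl one_ne_zero) (a := C)
    simpa using ENNReal.Tendsto.div_const this (Or.inr hc)
  have hμ : upperSDensity s μ ≤ C / c := by
    refine upperSDensity_le_of_eventually_measure_le hlim ?_
    filter_upwards [eventually_measure_le_of_upperSDensity_lt hC, eventually_gt_atTop 0]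
      with r hconv hr U hU hUc hrU
    rw [← ENNReal.mul_div_right_comm, ENNReal.le_div_iff_mul_le (Or.inl hc) (Or.inl hc_top)]
    exact measure_mul_measure_closedBall_le_of_conv_le hs.le μ σ hr hR hconv hU hUc hrU
  calc upperSDensity s μ * c ≤ C / c * c := by gcongr
    _ = C := ENNReal.div_mul_cancel hc hc_top

end UpperSDensity

/-- **Lemma.** If `μ` is a positive Borel measure on ℝⁿ, `σ` is a Borel probability measure
on ℝⁿ and `s > 0`, then `E_s⁺(μ ∗ σ) = E_s⁺(μ)`, where `μ ∗ σ` is the additive convolution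
(the pushforward of `μ × σ` under addition). -/
theorem upperSDensity_conv {n : ℕ} (s : ℝ) (hs : 0 < s)
    (μ σ : Measure (EuclideanSpace ℝ (Fin n))) [IsProbabilityMeasure σ] :
    upperSDensity s (μ.conv σ) = upperSDensity s μ := by
  rcases n.eq_zero_or_pos with rfl | hn
  · rw [upperSDensity_of_dim_zero, upperSDensity_of_dim_zero]
  refine le_antisymm (upperSDensity_conv_le hn μ σ) ?_
  have hσ : Tendsto (fun R : ℕ => σ (closedBall 0 R)) atTop (𝓝 1) := by
    simpa [iUnion_closedBall_nat, Function.comp_def] using tendsto_measure_iUnion_atTop (μ := σ)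
      fun _ _ h => closedBall_subset_closedBall (Nat.cast_le.2 h)
  have hlim := ENNReal.Tendsto.const_mul hσ (Or.inl one_ne_zero) (a := upperSDensity s μ)
  rw [mul_one] at hlim
  exact le_of_tendsto' hlim fun R => upperSDensity_mul_measure_closedBall_le hs μ σ R.cast_nonneg
end

section
/- Let K = K(B,D) be a self-similar set, where B is a similarity matrix with scaling factor ρ > 1, and let s = log(card D)/log ρ. Then limsup_{r→0} sup{H^s(K ∩ U)/(diam U)^s : U ⊆ ℝⁿ convex, U ∩ K ≠ ∅, 0 < diam U ≤ r} = sup_{r>0} sup{H^s(K ∩ U)/(diam U)^s : U ⊆ ℝⁿ convex, U ∩ K ≠ ∅, 0 < diam U ≤ r}; that is, the limsup as r → 0 equals the supremum over all convex sets U of positive diameter meeting K. -/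
open MeasureTheory Filter
open scoped ENNReal Topology

/-!
Since `0 ∈ D`, the self-similarity gives `K ⊆ B K`. Pulling a convex set `U` back by the
similarity `B` yields the convex set `B⁻¹ U` of diameter `ρ⁻¹ diam U`, whose part in `K` has at
least `ρ⁻ˢ` times the `s`-dimensional measure of `K ∩ U`; so its density is at least that of `U`.
Hence the supremum of densities over `diam U ≤ r` is monotone in `r` and does not decrease under
`r ↦ ρ⁻¹ r`, so it is constant on `(0, ∞)`, and its limit superior at `0` is that constant.
-/

noncomputable section

open Metric Set

theorem Metric.ediam_image_of_edist_eq {X Y : Type*} [PseudoEMetricSpace X]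
    [PseudoEMetricSpace Y] {f : X → Y} {c : ℝ≥0∞} (hf : ∀ x y, edist (f x) (f y) = c * edist x y)
    (S : Set X) : ediam (f '' S) = c * ediam S := by
  simp only [ediam, iSup_image, hf, ENNReal.mul_iSup]

variable {E : Type*} [NormedAddCommGroup E] [NormedSpace ℝ E]

section Similarity

variable {L : E →ₗ[ℝ] E} {ρ : ℝ}

theorem LinearMap.edist_map_eq_of_norm_map_eq (hρ : 0 ≤ ρ) (hL : ∀ x, ‖L x‖ = ρ * ‖x‖)
    (x y : E) : edist (L x) (L y) = ENNReal.ofReal ρ * edist x y := by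
  rw [edist_dist, edist_dist, dist_eq_norm, dist_eq_norm, ← map_sub, hL, ENNReal.ofReal_mul hρ]

theorem LinearMap.surjective_of_norm_map_eq [FiniteDimensional ℝ E] (hρ : 0 < ρ)
    (hL : ∀ x, ‖L x‖ = ρ * ‖x‖) : Function.Surjective L := by
  refine LinearMap.injective_iff_surjective.mp fun x y hxy => ?_
  have : ρ * ‖x - y‖ = 0 := by rw [← hL, map_sub, hxy, sub_self, norm_zero]
  simpa [hρ.ne', sub_eq_zero] using this

variable [MeasurableSpace E] [BorelSpace E]

def convexDensity (s : ℝ) (K : Set E) (r : ℝ) : ℝ≥0∞ :=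
  ⨆ (U : Set E) (_ : Convex ℝ U) (_ : (U ∩ K).Nonempty) (_ : 0 < diam U) (_ : diam U ≤ r),
    μH[s] (K ∩ U) / ediam U ^ s

theorem convexDensity_mono (s : ℝ) (K : Set E) : Monotone (convexDensity s K) :=
  fun _ _ hab => iSup₂_mono fun _ _ => iSup₂_mono fun _ _ =>
    iSup_le fun hU => le_iSup_of_le (hU.trans hab) le_rfl

theorem density_le_density_preimage (hLs : Function.Surjective L) (hρ : 0 < ρ)
    (hL : ∀ x, ‖L x‖ = ρ * ‖x‖) {K : Set E} (hK : K ⊆ L '' K) {s : ℝ} (hs : 0 ≤ s)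
    (U : Set E) :
    μH[s] (K ∩ U) / ediam U ^ s ≤ μH[s] (K ∩ L ⁻¹' U) / ediam (L ⁻¹' U) ^ s := by
  set c := ENNReal.ofReal ρ
  have hc : c ^ s ≠ 0 := (ENNReal.rpow_pos (ENNReal.ofReal_pos.mpr hρ) ENNReal.ofReal_ne_top).ne'
  have hc' : c ^ s ≠ ⊤ := ENNReal.rpow_ne_top_of_nonneg hs ENNReal.ofReal_ne_top
  have hedist := L.edist_map_eq_of_norm_map_eq hρ.le hL
  have hdiam : ediam U ^ s = c ^ s * ediam (L ⁻¹' U) ^ s := by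
    rw [← ENNReal.mul_rpow_of_nonneg _ _ hs, ← ediam_image_of_edist_eq hedist,
      image_preimage_eq U hLs]
  have hmeas : μH[s] (K ∩ U) ≤ c ^ s * μH[s] (K ∩ L ⁻¹' U) := calc
    μH[s] (K ∩ U) ≤ μH[s] (L '' (K ∩ L ⁻¹' U)) := by
      rw [image_inter_preimage]
      exact measure_mono (inter_subset_inter_left U hK)
    _ ≤ c ^ s * μH[s] (K ∩ L ⁻¹' U) :=
      LipschitzWith.hausdorffMeasure_image_le (K := ρ.toNNReal) (fun x y => (hedist x y).le) hs _
  calc μH[s] (K ∩ U) / ediam U ^ s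
      ≤ c ^ s * μH[s] (K ∩ L ⁻¹' U) / (c ^ s * ediam (L ⁻¹' U) ^ s) := by
        rw [hdiam]; exact ENNReal.div_le_div_right hmeas _
    _ = μH[s] (K ∩ L ⁻¹' U) / ediam (L ⁻¹' U) ^ s := ENNReal.mul_div_mul_left _ _ hc hc'

theorem convexDensity_le_convexDensity_inv_mul (hLs : Function.Surjective L) (hρ : 0 < ρ)
    (hL : ∀ x, ‖L x‖ = ρ * ‖x‖) {K : Set E} (hK : K ⊆ L '' K) {s : ℝ} (hs : 0 ≤ s) (r : ℝ) :
    convexDensity s K r ≤ convexDensity s K (ρ⁻¹ * r) := by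
  refine iSup_le fun U => iSup_le fun hU => iSup_le fun hUK => iSup_le fun hpos =>
    iSup_le fun hr => (density_le_density_preimage hLs hρ hL hK hs U).trans ?_
  have hdiam : diam U = ρ * diam (L ⁻¹' U) := by
    rw [diam, diam, ← image_preimage_eq U hLs,
      ediam_image_of_edist_eq (L.edist_map_eq_of_norm_map_eq hρ.le hL), image_preimage_eq U hLs,
      ENNReal.toReal_mul, ENNReal.toReal_ofReal hρ.le]
  have hUK' : (L ⁻¹' U ∩ K).Nonempty := by
    obtain ⟨_, hxU, hxK⟩ := hUK
    obtain ⟨y, hyK, rfl⟩ := hK hxK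
    exact ⟨y, hxU, hyK⟩
  have hpos' : 0 < diam (L ⁻¹' U) := pos_of_mul_pos_right (hdiam ▸ hpos) hρ.le
  have hr' : diam (L ⁻¹' U) ≤ ρ⁻¹ * r := by
    rw [le_inv_mul_iff₀ hρ, ← hdiam]; exact hr
  exact le_iSup_of_le (L ⁻¹' U) <| le_iSup_of_le (hU.linear_preimage L) <|
    le_iSup_of_le hUK' <| le_iSup_of_le hpos' <| le_iSup_of_le hr' le_rfl

end Similarity

theorem Monotone.le_of_le_comp_const_mul {α : Type*} [Preorder α] {g : ℝ → α}
    (hg : Monotone g) {c : ℝ} (hc : c < 1) (hstep : ∀ r, g r ≤ g (c * r)) {r t : ℝ}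
    (hr : 0 < r) (ht : 0 < t) : g r ≤ g t := by
  have hiter : ∀ k : ℕ, g r ≤ g (c ^ k * r) := fun k => by
    induction k with
    | zero => simp
    | succ k ih => exact ih.trans ((hstep _).trans_eq (by ring_nf))
  obtain ⟨k, hk⟩ := exists_pow_lt_of_lt_one (div_pos ht hr) hc
  exact (hiter k).trans (hg ((lt_div_iff₀ hr).mp hk).le)

theorem Monotone.limsup_nhdsGT_zero_eq_iSup {α : Type*} [CompleteLattice α] {g : ℝ → α}
    (hg : Monotone g) {c : ℝ} (hc : c < 1) (hstep : ∀ r, g r ≤ g (c * r)) :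
    limsup g (𝓝[>] 0) = ⨆ (r : ℝ) (_ : 0 < r), g r := by
  have hconst : ∀ r, 0 < r → g r = g 1 := fun r hr =>
    le_antisymm (hg.le_of_le_comp_const_mul hc hstep hr one_pos)
      (hg.le_of_le_comp_const_mul hc hstep one_pos hr)
  rw [limsup_congr ((eventually_mem_nhdsWithin (a := 0) (s := Ioi 0)).mono hconst), limsup_const]
  exact le_antisymm (le_iSup₂_of_le 1 one_pos le_rfl) (iSup₂_le fun r hr => (hconst r hr).le)

end

theorem limsup_convex_density_eq_sup_general {n : ℕ} (B : Matrix (Fin n) (Fin n) ℝ) (ρ : ℝ)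
    (hρ : 1 < ρ) (hsim : ∀ x : EuclideanSpace ℝ (Fin n), ‖Matrix.toEuclideanLin B x‖ = ρ * ‖x‖)
    (D : Finset (EuclideanSpace ℝ (Fin n))) (hD0 : (0 : EuclideanSpace ℝ (Fin n)) ∈ D)
    (K : Set (EuclideanSpace ℝ (Fin n)))
    (hK : Matrix.toEuclideanLin B '' K = ⋃ d ∈ D, (fun x => x + d) '' K)
    (s : ℝ) (hs : s = Real.log D.card / Real.log ρ) :
    Filter.limsup (fun r : ℝ =>
        ⨆ (U : Set (EuclideanSpace ℝ (Fin n))) (_ : Convex ℝ U) (_ : (U ∩ K).Nonempty)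
          (_ : 0 < Metric.diam U) (_ : Metric.diam U ≤ r),
          Measure.hausdorffMeasure s (K ∩ U) / EMetric.diam U ^ s) (𝓝[>] (0 : ℝ)) =
      ⨆ (r : ℝ) (_ : 0 < r),
        ⨆ (U : Set (EuclideanSpace ℝ (Fin n))) (_ : Convex ℝ U) (_ : (U ∩ K).Nonempty)
          (_ : 0 < Metric.diam U) (_ : Metric.diam U ≤ r),
          Measure.hausdorffMeasure s (K ∩ U) / EMetric.diam U ^ s := by
  have hρ0 : 0 < ρ := zero_lt_one.trans hρ
  have hs0 : 0 ≤ s := hs ▸ div_nonneg (Real.log_natCast_nonneg _) (Real.log_nonneg hρ.le)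
  have hKB : K ⊆ Matrix.toEuclideanLin B '' K := fun x hx =>
    hK ▸ Set.mem_biUnion hD0 ⟨x, hx, add_zero x⟩
  exact (convexDensity_mono s K).limsup_nhdsGT_zero_eq_iSup (inv_lt_one_of_one_lt₀ hρ)
    (convexDensity_le_convexDensity_inv_mul
      (LinearMap.surjective_of_norm_map_eq hρ0 hsim) hρ0 hsim hKB hs0)

/-- **Lemma.** Let `K = K(B,D)` be a self-similar set, where `B` is a similarity matrix with
scaling factor `ρ > 1`, and let `s = log(card D)/log ρ`. Then
`limsup_{r→0} sup { H^s(K ∩ U)/(diam U)^s : U convex, U ∩ K ≠ ∅, 0 < diam U ≤ r }`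
equals the supremum of the same quantity over all `r > 0`. -/
theorem limsup_convex_density_eq_sup {n : ℕ} (B : Matrix (Fin n) (Fin n) ℝ) (ρ : ℝ)
    (hρ : 1 < ρ) (hsim : ∀ x : EuclideanSpace ℝ (Fin n), ‖Matrix.toEuclideanLin B x‖ = ρ * ‖x‖)
    (D : Finset (EuclideanSpace ℝ (Fin n))) (hD0 : (0 : EuclideanSpace ℝ (Fin n)) ∈ D)
    (K : Set (EuclideanSpace ℝ (Fin n))) (hKc : IsCompact K) (hKne : K.Nonempty)
    (hK : Matrix.toEuclideanLin B '' K = ⋃ d ∈ D, (fun x => x + d) '' K)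
    (s : ℝ) (hs : s = Real.log D.card / Real.log ρ) :
    Filter.limsup (fun r : ℝ =>
        ⨆ (U : Set (EuclideanSpace ℝ (Fin n))) (_ : Convex ℝ U) (_ : (U ∩ K).Nonempty)
          (_ : 0 < Metric.diam U) (_ : Metric.diam U ≤ r),
          Measure.hausdorffMeasure s (K ∩ U) / EMetric.diam U ^ s) (𝓝[>] (0 : ℝ)) =
      ⨆ (r : ℝ) (_ : 0 < r),
        ⨆ (U : Set (EuclideanSpace ℝ (Fin n))) (_ : Convex ℝ U) (_ : (U ∩ K).Nonempty)
          (_ : 0 < Metric.diam U) (_ : Metric.diam U ≤ r),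
          Measure.hausdorffMeasure s (K ∩ U) / EMetric.diam U ^ s :=
  limsup_convex_density_eq_sup_general B ρ hρ hsim D hD0 K hK s hs
end

section
/- Let B be an n×n similarity matrix with scaling factor ρ > 1 and let D ⊂ ℝⁿ be a finite set with 0 ∈ D whose similarity dimension s = log(card D)/log ρ satisfies s ≤ n. Then D⁺(μ) = ∞ if and only if E_s⁺(μ) = ∞. -/
/-!
Let `L = sup_z μ(closedBall z 1)`. Because `0 ∈ D`, `μ` is dominated by the sum over `d ∈ D` of
its pushforwards under `ψ_d x = B x + d`, and every `ψ_d` expands distances by the factor `ρ`.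
Pulling a set of diameter at most `ρ ^ k` back `k` times therefore leaves `(card D) ^ k` pieces of
diameter at most one, so `μ(A) ≤ ρ ^ s L R ^ s` whenever `diam A ≤ R` and `R ≥ 1`, as
`card D = ρ ^ s`. Since `s ≤ n`, this bounds both `D⁺(μ)` and `E_s⁺(μ)` by multiples of `L`.
Conversely, if `L = ∞` then cubes of side `N ≥ 2` and balls of radius `r ≥ 1` carry infinite mass,
so both densities are infinite; in dimension zero `μ` is a Dirac mass, so `L = 1`.
-/

open MeasureTheory Filter
open scoped ENNReal

open Metric Bornology

section Expanding

variable {X : Type*} [PseudoMetricSpace X] {ρ : ℝ}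

lemma dist_le_diam_div_of_expanding {f : X → X} {A : Set X} (hρ : 0 < ρ)
    (hf : ∀ x y, ρ * dist x y ≤ dist (f x) (f y)) (hA : IsBounded A) {x y : X}
    (hx : f x ∈ A) (hy : f y ∈ A) : dist x y ≤ diam A / ρ := by
  rw [le_div_iff₀' hρ]
  exact (hf x y).trans (dist_le_diam_of_mem hA hx hy)

lemma ediam_eq_ofReal_diam {A : Set X} (hA : IsBounded A) : ediam A = ENNReal.ofReal (diam A) :=
  (ENNReal.ofReal_toReal hA.ediam_ne_top).symm

variable [MeasurableSpace X] {ι : Type*} [Fintype ι] {ν : Measure X} {ψ : ι → X → X} {s : ℝ}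

lemma measure_le_iSup_closedBall_of_diam_le_one {A : Set X} (hA : IsBounded A)
    (hd : diam A ≤ 1) : ν A ≤ ⨆ z, ν (closedBall z 1) := by
  rcases A.eq_empty_or_nonempty with rfl | ⟨x, hx⟩
  · simp
  · have hsub : A ⊆ closedBall x 1 := fun y hy => (dist_le_diam_of_mem hA hy hx).trans hd
    exact (measure_mono hsub).trans (le_iSup (fun z => ν (closedBall z 1)) x)

lemma measure_le_card_pow_mul_iSup_closedBall (hρ : 0 < ρ) (hψm : ∀ i, Measurable (ψ i))
    (hψ : ∀ i x y, ρ * dist x y ≤ dist (ψ i x) (ψ i y)) (hν : ν ≤ ∑ i, ν.map (ψ i)) (k : ℕ)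
    {A : Set X} (hAm : MeasurableSet A) (hA : IsBounded A) (hd : diam A ≤ ρ ^ k) :
    ν A ≤ Fintype.card ι ^ k * ⨆ z, ν (closedBall z 1) := by
  induction k generalizing A with
  | zero => simpa using measure_le_iSup_closedBall_of_diam_le_one hA (by simpa using hd)
  | succ k ih =>
    have hpre : ∀ i, ν (ψ i ⁻¹' A) ≤ Fintype.card ι ^ k * ⨆ z, ν (closedBall z 1) := by
      intro i
      have hdist := fun x (hx : x ∈ ψ i ⁻¹' A) y (hy : y ∈ ψ i ⁻¹' A) =>
        dist_le_diam_div_of_expanding hρ (hψ i) hA hx hy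
      refine ih (hψm i hAm) (isBounded_iff.2 ⟨_, hdist⟩) ?_
      calc diam (ψ i ⁻¹' A) ≤ diam A / ρ := diam_le_of_forall_dist_le (by positivity) hdist
        _ ≤ ρ ^ (k + 1) / ρ := by gcongr
        _ = ρ ^ k := by field_simp; ring
    calc ν A ≤ ∑ i, ν (ψ i ⁻¹' A) := by
          simpa [Measure.map_apply (hψm _) hAm] using Measure.le_iff'.1 hν A
      _ ≤ ∑ _i : ι, Fintype.card ι ^ k * ⨆ z, ν (closedBall z 1) :=
          Finset.sum_le_sum fun i _ => hpre i
      _ = Fintype.card ι ^ (k + 1) * ⨆ z, ν (closedBall z 1) := by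
          simp [pow_succ', mul_assoc]

def HasLargeScaleGrowth (ν : Measure X) (s : ℝ) (K : ℝ≥0∞) : Prop :=
  ∀ ⦃A : Set X⦄ ⦃R : ℝ⦄, MeasurableSet A → IsBounded A → 1 ≤ R → diam A ≤ R →
    ν A ≤ K * ENNReal.ofReal (R ^ s)

lemma hasLargeScaleGrowth_of_le_sum_map (hρ : 1 < ρ) (hs : 0 ≤ s)
    (hcard : (Fintype.card ι : ℝ) ≤ ρ ^ s) (hψm : ∀ i, Measurable (ψ i))
    (hψ : ∀ i x y, ρ * dist x y ≤ dist (ψ i x) (ψ i y)) (hν : ν ≤ ∑ i, ν.map (ψ i)) :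
    HasLargeScaleGrowth ν s (ENNReal.ofReal (ρ ^ s) * ⨆ z, ν (closedBall z 1)) := by
  intro A R hAm hA hR hd
  have hρ0 : 0 < ρ := zero_lt_one.trans hρ
  obtain ⟨m, hmR, hRm⟩ := exists_nat_pow_near hR hρ
  have hcard_pow : (Fintype.card ι : ℝ) ^ (m + 1) ≤ ρ ^ s * R ^ s :=
    calc (Fintype.card ι : ℝ) ^ (m + 1) ≤ (ρ ^ s) ^ (m + 1) := by gcongr
      _ = ρ ^ s * (ρ ^ m) ^ s := by
          rw [pow_succ, ← Real.rpow_natCast_mul hρ0.le, ← Real.rpow_mul_natCast hρ0.le,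
            mul_comm s, mul_comm]
      _ ≤ ρ ^ s * R ^ s := by gcongr
  calc ν A ≤ Fintype.card ι ^ (m + 1) * ⨆ z, ν (closedBall z 1) :=
        measure_le_card_pow_mul_iSup_closedBall hρ0 hψm hψ hν (m + 1) hAm hA (hd.trans hRm.le)
    _ ≤ ENNReal.ofReal (ρ ^ s * R ^ s) * ⨆ z, ν (closedBall z 1) := by
        gcongr
        rw [← ENNReal.ofReal_natCast, ← ENNReal.ofReal_pow (by positivity)]
        exact ENNReal.ofReal_le_ofReal hcard_pow
    _ = _ := by
        rw [ENNReal.ofReal_mul (by positivity)]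
        ring

end Expanding

section Density

variable {n : ℕ} {ν : Measure (EuclideanSpace ℝ (Fin n))} {s : ℝ} {K : ℝ≥0∞}

local notation "E" => EuclideanSpace ℝ (Fin n)

/-- The closedCube `I_N(z)`. -/
def closedCube (z : E) (N : ℝ) : Set E := {y | ∀ i, |y i - z i| ≤ N / 2}

lemma measurableSet_closedCube (z : E) (N : ℝ) : MeasurableSet (closedCube z N) := by
  simp only [closedCube, Set.ofPred_forall]
  exact MeasurableSet.iInter fun i => measurableSet_le (by fun_prop) measurable_const

lemma dist_le_of_mem_closedCube {z y y' : E} {N : ℝ} (hN : 0 ≤ N) (hy : y ∈ closedCube z N)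
    (hy' : y' ∈ closedCube z N) : dist y y' ≤ (n + 1) * N := by
  have hcoord : ∀ i, dist (y i) (y' i) ^ 2 ≤ N ^ 2 := fun i => by
    have := abs_sub_le (y i) (z i) (y' i)
    rw [abs_sub_comm (z i)] at this
    rw [Real.dist_eq]
    gcongr
    linarith [hy i, hy' i]
  rw [EuclideanSpace.dist_eq, Real.sqrt_le_left (by positivity)]
  calc ∑ i, dist (y i) (y' i) ^ 2 ≤ ∑ _i : Fin n, N ^ 2 := Finset.sum_le_sum fun i _ => hcoord i
    _ = n * N ^ 2 := by simp
    _ ≤ ((n + 1) * N) ^ 2 := by nlinarith [sq_nonneg N]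

lemma closedBall_subset_closedCube (z : E) {N : ℝ} (hN : 2 ≤ N) : closedBall z 1 ⊆ closedCube z N :=
  fun y hy i => by
    have := (PiLp.dist_apply_le y z i).trans (mem_closedBall.1 hy)
    rw [Real.dist_eq] at this
    linarith

lemma beurlingUpper_le (hsn : s ≤ n) (hν : HasLargeScaleGrowth ν s K) :
    beurlingUpper ν ≤ ENNReal.ofReal ((n + 1) ^ s) * K := by
  refine limsup_le_of_le (by isBoundedDefault) ?_
  filter_upwards [eventually_ge_atTop 1] with N hN
  refine iSup_le fun z => ENNReal.div_le_of_le_mul ?_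
  have hN0 : 0 ≤ N := zero_le_one.trans hN
  have hdist := fun y (hy : y ∈ closedCube z N) y' (hy' : y' ∈ closedCube z N) =>
    dist_le_of_mem_closedCube hN0 hy hy'
  have hR : 1 ≤ (n + 1) * N := one_le_mul_of_one_le_of_one_le (by simp) hN
  have hpow : ((n + 1) * N) ^ s ≤ (n + 1) ^ s * N ^ n := by
    rw [Real.mul_rpow (by positivity) hN0, ← Real.rpow_natCast N n]
    gcongr
  calc ν (closedCube z N) ≤ K * ENNReal.ofReal (((n + 1) * N) ^ s) :=
        hν (measurableSet_closedCube z N) (isBounded_iff.2 ⟨_, hdist⟩) hR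
          (diam_le_of_forall_dist_le (by positivity) hdist)
    _ ≤ K * ENNReal.ofReal ((n + 1) ^ s * N ^ n) := by gcongr
    _ = ENNReal.ofReal ((n + 1) ^ s) * K * ENNReal.ofReal (N ^ n) := by
        rw [ENNReal.ofReal_mul (by positivity)]
        ring

lemma upperSDensity_le (hν : HasLargeScaleGrowth ν s K) : upperSDensity s ν ≤ K := by
  refine limsup_le_of_le (by isBoundedDefault) ?_
  filter_upwards [eventually_ge_atTop 1] with r hr
  refine iSup_le fun U => iSup_le fun hU => iSup_le fun _ => iSup_le fun hrU =>
    ENNReal.div_le_of_le_mul ?_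
  show ν U ≤ K * ediam U ^ s
  rw [ediam_eq_ofReal_diam hU.isBounded, ENNReal.ofReal_rpow_of_pos (by linarith)]
  exact hν hU.isClosed.measurableSet hU.isBounded (hr.trans hrU) le_rfl

lemma beurlingUpper_eq_top (h : ⨆ z, ν (closedBall z 1) = ⊤) : beurlingUpper ν = ⊤ := by
  have hev : ∀ᶠ N : ℝ in atTop, ⨆ z : E, ν (closedCube z N) / ENNReal.ofReal (N ^ n) = ⊤ := by
    filter_upwards [eventually_ge_atTop 2] with N hN
    refine top_le_iff.1 ?_
    calc ⊤ = ⨆ z : E, ν (closedBall z 1) / ENNReal.ofReal (N ^ n) := by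
          rw [← ENNReal.iSup_div, h, ENNReal.top_div_of_ne_top ENNReal.ofReal_ne_top]
      _ ≤ ⨆ z : E, ν (closedCube z N) / ENNReal.ofReal (N ^ n) :=
          iSup_mono fun z => by gcongr; exact closedBall_subset_closedCube z hN
  exact (limsup_congr hev).trans (limsup_const _)

lemma upperSDensity_eq_top (hn : 0 < n) (h : ⨆ z, ν (closedBall z 1) = ⊤) :
    upperSDensity s ν = ⊤ := by
  have : Nonempty (Fin n) := ⟨⟨0, hn⟩⟩
  have hev : ∀ᶠ r : ℝ in atTop, ⨆ (U : Set E) (_ : IsCompact U) (_ : Convex ℝ U)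
      (_ : r ≤ diam U), ν U / ediam U ^ s = ⊤ := by
    filter_upwards [eventually_ge_atTop 1] with r hr
    have hr0 : 0 ≤ r := zero_le_one.trans hr
    have hdiam : ∀ z : E, diam (closedBall z r) = 2 * r := fun z => diam_closedBall_eq z hr0
    have hediam : ∀ z : E, ediam (closedBall z r) ^ s = ENNReal.ofReal ((2 * r) ^ s) :=
      fun z => by
        rw [ediam_eq_ofReal_diam isBounded_closedBall, hdiam z,
          ENNReal.ofReal_rpow_of_pos (by linarith)]
    refine top_le_iff.1 ?_
    calc ⊤ = ⨆ z : E, ν (closedBall z 1) / ENNReal.ofReal ((2 * r) ^ s) := by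
          rw [← ENNReal.iSup_div, h, ENNReal.top_div_of_ne_top ENNReal.ofReal_ne_top]
      _ ≤ ⨆ z : E, ν (closedBall z r) / ediam (closedBall z r) ^ s :=
          iSup_mono fun z => by rw [hediam]; gcongr
      _ ≤ _ := iSup_le fun z => by
          have hrz : r ≤ diam (closedBall z r) := by linarith [hdiam z]
          exact le_iSup_of_le (closedBall z r) <| le_iSup_of_le (isCompact_closedBall z r) <|
            le_iSup_of_le (convex_closedBall z r) <| le_iSup_of_le hrz le_rfl
  exact (limsup_congr hev).trans (limsup_const _)

end Density

lemma dist_map_add_right_eq_mul_dist {V : Type*} [NormedAddCommGroup V] [NormedSpace ℝ V] {ρ : ℝ}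
    {T : V →ₗ[ℝ] V} (hT : ∀ x, ‖T x‖ = ρ * ‖x‖) (d x y : V) :
    dist (T x + d) (T y + d) = ρ * dist x y := by
  rw [dist_add_right, dist_eq_norm, ← map_sub, hT, dist_eq_norm]

section SelfAffine

variable {n : ℕ} (B : Matrix (Fin n) (Fin n) ℝ) (D : Finset (EuclideanSpace ℝ (Fin n)))

local notation "E" => EuclideanSpace ℝ (Fin n)

/-- The measure `μ_N`. -/
noncomputable def partialSelfAffineMeasure (N : ℕ) : Measure E :=
  Measure.sum fun f : Fin N → D =>
    Measure.dirac (∑ j : Fin N, Matrix.toEuclideanLin (B ^ (j : ℕ)) (f j))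

lemma selfAffineMeasure_eq_iSup :
    selfAffineMeasure B D = ⨆ N, partialSelfAffineMeasure B D N := rfl

lemma partialSelfAffineMeasure_zero : partialSelfAffineMeasure B D 0 = Measure.dirac 0 := by
  simp [partialSelfAffineMeasure]

lemma sum_toEuclideanLin_pow_cons {N : ℕ} (d : D) (g : Fin N → D) :
    ∑ j : Fin (N + 1), Matrix.toEuclideanLin (B ^ (j : ℕ)) ((Fin.cons d g : Fin (N + 1) → D) j)
      = Matrix.toEuclideanLin B (∑ j : Fin N, Matrix.toEuclideanLin (B ^ (j : ℕ)) (g j)) + d := by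
  simp [Fin.sum_univ_succ, Matrix.toLpLin_pow, pow_succ', map_sum, add_comm]

lemma measurable_toEuclideanLin_add (d : E) :
    Measurable fun x : E => Matrix.toEuclideanLin B x + d :=
  ((Matrix.toEuclideanLin B).continuous_of_finiteDimensional.add continuous_const).measurable

lemma partialSelfAffineMeasure_succ (N : ℕ) :
    partialSelfAffineMeasure B D (N + 1) =
      ∑ d : D, (partialSelfAffineMeasure B D N).map (fun x => Matrix.toEuclideanLin B x + d) := by
  rw [partialSelfAffineMeasure, ← Measure.sum_comp_equiv (Fin.consEquiv fun _ => D)]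
  simp only [Function.comp_def, Fin.consEquiv_apply, sum_toEuclideanLin_pow_cons]
  rw [← Measure.sum_sum fun (d : D) (g : Fin N → D) => Measure.dirac
    (Matrix.toEuclideanLin B (∑ j : Fin N, Matrix.toEuclideanLin (B ^ (j : ℕ)) (g j : E)) + d),
    Measure.sum_fintype]
  refine Finset.sum_congr rfl fun d _ => ?_
  have hψ := measurable_toEuclideanLin_add B (d : E)
  rw [partialSelfAffineMeasure, Measure.map_sum hψ.aemeasurable]
  simp only [Measure.map_dirac' hψ]

lemma selfAffineMeasure_le_sum_map (hD0 : (0 : E) ∈ D) :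
    selfAffineMeasure B D ≤
      ∑ d : D, (selfAffineMeasure B D).map fun x => Matrix.toEuclideanLin B x + d := by
  have hψ := measurable_toEuclideanLin_add B
  have hle : ∀ N, partialSelfAffineMeasure B D N ≤ selfAffineMeasure B D :=
    le_iSup (partialSelfAffineMeasure B D)
  refine (selfAffineMeasure_eq_iSup B D).trans_le (iSup_le fun N => ?_)
  cases N with
  | zero =>
    calc partialSelfAffineMeasure B D 0
        = (partialSelfAffineMeasure B D 0).map fun x => Matrix.toEuclideanLin B x + 0 := by
          simp [partialSelfAffineMeasure_zero]
      _ ≤ (selfAffineMeasure B D).map fun x => Matrix.toEuclideanLin B x + 0 :=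
          Measure.map_mono (hle 0) (hψ 0)
      _ ≤ _ := Finset.single_le_sum (f := fun d : D =>
          (selfAffineMeasure B D).map fun x => Matrix.toEuclideanLin B x + d)
          (fun _ _ => Measure.zero_le _) (Finset.mem_univ ⟨0, hD0⟩)
  | succ N =>
    rw [partialSelfAffineMeasure_succ]
    exact Finset.sum_le_sum fun d _ => Measure.map_mono (hle N) (hψ d)

lemma selfAffineMeasure_eq_dirac_of_eq_zero (hn : n = 0) (hD0 : (0 : E) ∈ D) :
    selfAffineMeasure B D = Measure.dirac 0 := by
  subst hn
  have : Unique D := uniqueOfSubsingleton ⟨0, hD0⟩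
  rw [selfAffineMeasure_eq_iSup]
  refine (iSup_congr fun N => ?_).trans iSup_const
  rw [partialSelfAffineMeasure, Measure.sum_fintype, Fintype.sum_unique]
  exact congrArg Measure.dirac (Subsingleton.elim _ _)

end SelfAffine

/-- **Corollary.** Let `B` be an `n×n` similarity matrix with scaling factor `ρ > 1` and let
`D ⊆ ℝⁿ` be finite with `0 ∈ D`, whose similarity dimension `s = log(card D)/log ρ` satisfies
`s ≤ n`. Then `D⁺(μ) = ∞` if and only if `E_s⁺(μ) = ∞`. -/
theorem upperBeurling_top_iff_upperSDensity_top {n : ℕ} (B : Matrix (Fin n) (Fin n) ℝ) (ρ : ℝ)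
    (hρ : 1 < ρ) (hsim : ∀ x : EuclideanSpace ℝ (Fin n), ‖Matrix.toEuclideanLin B x‖ = ρ * ‖x‖)
    (D : Finset (EuclideanSpace ℝ (Fin n))) (hD0 : (0 : EuclideanSpace ℝ (Fin n)) ∈ D)
    (s : ℝ) (hs : s = Real.log D.card / Real.log ρ) (hsn : s ≤ n) :
    beurlingUpper (selfAffineMeasure B D) = ⊤ ↔
      upperSDensity s (selfAffineMeasure B D) = ⊤ := by
  set L := ⨆ z, selfAffineMeasure B D (closedBall z 1)
  have hcard : (1 : ℝ) ≤ D.card := by exact_mod_cast Finset.card_pos.2 ⟨0, hD0⟩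
  have hs0 : 0 ≤ s := hs ▸ Real.logb_nonneg hρ hcard
  have hρs : ρ ^ s = D.card := hs ▸ Real.rpow_logb (by linarith) hρ.ne' (by linarith)
  have hgrowth : HasLargeScaleGrowth (selfAffineMeasure B D) s (ENNReal.ofReal (ρ ^ s) * L) :=
    hasLargeScaleGrowth_of_le_sum_map hρ hs0 (by simp [hρs])
      (fun d : D => measurable_toEuclideanLin_add B d)
      (fun (d : D) x y => (dist_map_add_right_eq_mul_dist hsim d x y).ge)
      (selfAffineMeasure_le_sum_map B D hD0)
  by_cases hL : L = ⊤
  · have hn : 0 < n := Nat.pos_of_ne_zero fun hn => ENNReal.one_ne_top <| top_le_iff.1 <|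
      hL ▸ iSup_le fun z => by
        rw [selfAffineMeasure_eq_dirac_of_eq_zero B D hn hD0]
        exact prob_le_one
    exact iff_of_true (beurlingUpper_eq_top hL) (upperSDensity_eq_top hn hL)
  · have hK : ENNReal.ofReal (ρ ^ s) * L ≠ ⊤ := ENNReal.mul_ne_top ENNReal.ofReal_ne_top hL
    exact iff_of_false
      (ne_top_of_le_ne_top (ENNReal.mul_ne_top ENNReal.ofReal_ne_top hK)
        (beurlingUpper_le hsn hgrowth))
      (ne_top_of_le_ne_top hK (upperSDensity_le hgrowth))
end

section
/- Let N ∈ ℝ with N ≥ 3, let d > 0 be real, and let D_∞ = ⋃_{k≥1}{Σ_{j=0}^{k−1} N^j ℓ_j : ℓ_0,…,ℓ_{k−1} ∈ {0,d}}. If b = Σ_{j=0}^{m} N^j r_j with r_j ∈ {0,d} for all j, then the number of elements of D_∞ ∩ [0,b] equals Σ_{j=0}^{m} 2^j (r_j/d) + 1. -/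
open scoped ENNReal

/-- `D_∞ = ⋃_{k≥1} { Σ_{j=0}^{k−1} N^j ℓ_j : ℓ_j ∈ {0,d} }` for the one-dimensional digit
set `{0, d}` and dilation `N`. -/
def DinftyOne (N d : ℝ) : Set ℝ :=
  {x | ∃ k : ℕ, 1 ≤ k ∧ ∃ ℓ : Fin k → ℝ, (∀ j, ℓ j = 0 ∨ ℓ j = d) ∧
    x = ∑ j : Fin k, N ^ (j : ℕ) * ℓ j}

noncomputable def Tsum (N d : ℝ) (k : ℕ) (ε : ℕ → ℕ) : ℝ :=
  ∑ j ∈ Finset.range k, N ^ j * (d * ε j)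

def Bsum (k : ℕ) (ε : ℕ → ℕ) : ℕ := ∑ j ∈ Finset.range k, 2 ^ j * ε j

lemma Tsum_nonneg {N d : ℝ} (hN : 0 ≤ N) (hd : 0 ≤ d) (k : ℕ) (ε : ℕ → ℕ) :
    0 ≤ Tsum N d k ε := by
  apply Finset.sum_nonneg
  intro j _
  have : (0:ℝ) ≤ (ε j : ℝ) := by positivity
  positivity

lemma Tsum_bound {N d : ℝ} (hN : 2 ≤ N) (hd : 0 ≤ d) {ε : ℕ → ℕ}
    (hε : ∀ j, ε j ≤ 1) : ∀ k, Tsum N d k ε + d ≤ d * N ^ k := by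
  intro k
  induction k with
  | zero => simp [Tsum]
  | succ k ih =>
    have hNp : (0:ℝ) ≤ N ^ k := by positivity
    have h1 : (ε k : ℝ) ≤ 1 := by exact_mod_cast hε k
    have hS : Tsum N d (k+1) ε = Tsum N d k ε + N ^ k * (d * ε k) := by
      simp [Tsum, Finset.sum_range_succ]
    have e2 : N ^ k * (d * (ε k : ℝ)) ≤ N ^ k * (d * 1) := by
      apply mul_le_mul_of_nonneg_left _ hNp
      exact mul_le_mul_of_nonneg_left h1 hd
    have e1 : (0:ℝ) ≤ (d * N ^ k) * (N - 2) :=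
      mul_nonneg (mul_nonneg hd hNp) (by linarith)
    rw [hS, pow_succ]
    nlinarith

lemma Bsum_bound {ε : ℕ → ℕ} (hε : ∀ j, ε j ≤ 1) : ∀ k, Bsum k ε < 2 ^ k := by
  intro k
  induction k with
  | zero => simp [Bsum]
  | succ k ih =>
    have hS : Bsum (k+1) ε = Bsum k ε + 2 ^ k * ε k := by
      simp [Bsum, Finset.sum_range_succ]
    have h2 : 2 ^ k * ε k ≤ 2 ^ k * 1 := Nat.mul_le_mul_left _ (hε k)
    rw [hS, pow_succ]
    omega

lemma Tsum_mono {N d : ℝ} (hN : 2 ≤ N) (hd : 0 < d) {ε ε' : ℕ → ℕ}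
    (hε : ∀ j, ε j ≤ 1) (hε' : ∀ j, ε' j ≤ 1) :
    ∀ k, Bsum k ε < Bsum k ε' → Tsum N d k ε + d ≤ Tsum N d k ε' := by
  intro k
  induction k with
  | zero => simp [Bsum]
  | succ k ih =>
    intro hB
    have hBe : Bsum (k+1) ε = Bsum k ε + 2 ^ k * ε k := by
      simp [Bsum, Finset.sum_range_succ]
    have hBe' : Bsum (k+1) ε' = Bsum k ε' + 2 ^ k * ε' k := by
      simp [Bsum, Finset.sum_range_succ]
    have hTe : Tsum N d (k+1) ε = Tsum N d k ε + N ^ k * (d * ε k) := by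
      simp [Tsum, Finset.sum_range_succ]
    have hTe' : Tsum N d (k+1) ε' = Tsum N d k ε' + N ^ k * (d * ε' k) := by
      simp [Tsum, Finset.sum_range_succ]
    rw [hTe, hTe']
    rw [hBe, hBe'] at hB
    rcases Nat.le_one_iff_eq_zero_or_eq_one.1 (hε k) with h1 | h1 <;>
      rcases Nat.le_one_iff_eq_zero_or_eq_one.1 (hε' k) with h2 | h2 <;>
      rw [h1, h2] at hB ⊢ <;> push_cast
    · have := ih (by omega); linarith
    · have hb := Tsum_bound hN hd.le hε k
      have h0 := Tsum_nonneg (show (0:ℝ) ≤ N by linarith) hd.le k ε'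
      linarith [hb, h0]
    · exfalso
      have := Bsum_bound hε' k
      omega
    · have := ih (by omega); linarith

lemma Tsum_eq_of_Bsum_eq {N d : ℝ} (hN : 2 ≤ N) (hd : 0 < d) {ε ε' : ℕ → ℕ}
    (hε : ∀ j, ε j ≤ 1) (hε' : ∀ j, ε' j ≤ 1) :
    ∀ k, Bsum k ε = Bsum k ε' → Tsum N d k ε = Tsum N d k ε' := by
  intro k
  induction k with
  | zero => simp [Tsum]
  | succ k ih =>
    intro hB
    have hBe : Bsum (k+1) ε = Bsum k ε + 2 ^ k * ε k := by
      simp [Bsum, Finset.sum_range_succ]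
    have hBe' : Bsum (k+1) ε' = Bsum k ε' + 2 ^ k * ε' k := by
      simp [Bsum, Finset.sum_range_succ]
    have hTe : Tsum N d (k+1) ε = Tsum N d k ε + N ^ k * (d * ε k) := by
      simp [Tsum, Finset.sum_range_succ]
    have hTe' : Tsum N d (k+1) ε' = Tsum N d k ε' + N ^ k * (d * ε' k) := by
      simp [Tsum, Finset.sum_range_succ]
    rw [hTe, hTe']
    rw [hBe, hBe'] at hB
    have hb1 := Bsum_bound hε k
    have hb2 := Bsum_bound hε' k
    rcases Nat.le_one_iff_eq_zero_or_eq_one.1 (hε k) with h1 | h1 <;>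
      rcases Nat.le_one_iff_eq_zero_or_eq_one.1 (hε' k) with h2 | h2 <;>
      rw [h1, h2] at hB ⊢
    · rw [ih (by omega)]
    · omega
    · omega
    · rw [ih (by omega)]

lemma Tsum_le_iff {N d : ℝ} (hN : 2 ≤ N) (hd : 0 < d) {ε ε' : ℕ → ℕ}
    (hε : ∀ j, ε j ≤ 1) (hε' : ∀ j, ε' j ≤ 1) (k : ℕ) :
    Tsum N d k ε ≤ Tsum N d k ε' ↔ Bsum k ε ≤ Bsum k ε' := by
  constructor
  · intro h
    by_contra hc
    have := Tsum_mono hN hd hε' hε k (by omega)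
    linarith
  · intro h
    rcases lt_or_eq_of_le h with h | h
    · have := Tsum_mono hN hd hε hε' k h
      linarith
    · exact (Tsum_eq_of_Bsum_eq hN hd hε hε' k h).le

lemma Bsum_testBit : ∀ k n, n < 2 ^ k →
    Bsum k (fun j => (n.testBit j).toNat) = n := by
  intro k
  induction k with
  | zero => intro n hn; interval_cases n; simp [Bsum]
  | succ k ih =>
    intro n hn
    have hp : 2 ^ (k+1) = 2 ^ k * 2 := pow_succ 2 k
    have h2 : n / 2 < 2 ^ k := by omega
    have key : Bsum (k+1) (fun j => (n.testBit j).toNat)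
        = 2 * Bsum k (fun j => ((n/2).testBit j).toNat) + (n.testBit 0).toNat := by
      unfold Bsum
      rw [Finset.sum_range_succ', Finset.mul_sum]
      congr 1
      · apply Finset.sum_congr rfl
        intro j _
        simp only [Nat.testBit_add_one]
        ring
      · simp
    rw [key, ih _ h2]
    have hb : (n.testBit 0).toNat = n % 2 := by
      rw [Nat.testBit_zero]
      rcases Nat.mod_two_eq_zero_or_one n with h | h <;> simp [h]
    omega

lemma Tsum_pad {N d : ℝ} {ε : ℕ → ℕ} {k k' : ℕ} (hk : k ≤ k')
    (h0 : ∀ j, k ≤ j → ε j = 0) : Tsum N d k' ε = Tsum N d k ε := by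
  unfold Tsum
  rw [← Finset.sum_subset (Finset.range_subset_range.2 hk)]
  intro j hj hj'
  rw [h0 j (by simp at hj'; omega)]
  simp

lemma Bsum_pad {ε : ℕ → ℕ} {k k' : ℕ} (hk : k ≤ k')
    (h0 : ∀ j, k ≤ j → ε j = 0) : Bsum k' ε = Bsum k ε := by
  unfold Bsum
  rw [← Finset.sum_subset (Finset.range_subset_range.2 hk)]
  intro j hj hj'
  rw [h0 j (by simp at hj'; omega)]
  simp

/-- **Lemma.** Let `N ≥ 3` be real and `d > 0`. If `b = Σ_{j=0}^{m} N^j r_j` with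
`r_j ∈ {0, d}`, then the number of elements of `D_∞ ∩ [0,b]` equals
`Σ_{j=0}^{m} 2^j (r_j/d) + 1`. -/
theorem card_Dinfty_inter_Icc (N d : ℝ) (hN : 3 ≤ N) (hd : 0 < d)
    (m : ℕ) (r : Fin (m + 1) → ℝ) (hr : ∀ j, r j = 0 ∨ r j = d)
    (b : ℝ) (hb : b = ∑ j : Fin (m + 1), N ^ (j : ℕ) * r j) :
    ((DinftyOne N d ∩ Set.Icc 0 b).ncard : ℝ) =
      ∑ j : Fin (m + 1), 2 ^ (j : ℕ) * (r j / d) + 1 := by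
  have hN2 : (2:ℝ) ≤ N := by linarith
  have hK : True := trivial
  set η : ℕ → ℕ := fun j => if h : j < (m + 1) then (if r ⟨j, h⟩ = d then 1 else 0) else 0 with hη
  have hη1 : ∀ j, η j ≤ 1 := by
    intro j; simp only [hη]; split_ifs <;> omega
  have hη0 : ∀ j, (m + 1) ≤ j → η j = 0 := by
    intro j hj; simp only [hη]; rw [dif_neg (by omega)]
  have hrη : ∀ (j : ℕ) (h : j < (m + 1)), r ⟨j, h⟩ = d * η j := by
    intro j h
    simp only [hη, dif_pos h]
    rcases hr ⟨j, h⟩ with h0 | h1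
    · rw [if_neg (by rw [h0]; exact fun he => absurd he.symm hd.ne'), h0]; simp
    · rw [if_pos h1, h1]; simp
  have hbT : b = Tsum N d (m + 1) η := by
    rw [hb, Tsum, ← Fin.sum_univ_eq_sum_range (fun j => N ^ j * (d * η j)) (m + 1)]
    apply Finset.sum_congr rfl
    intro j _
    rw [show r j = d * η (j : ℕ) from hrη j.1 j.isLt]
  set n₀ := Bsum (m + 1) η with hn₀
  have hn₀lt : n₀ < 2 ^ (m + 1) := Bsum_bound hη1 (m + 1)
  set V : ℕ → ℝ := fun n => Tsum N d (m + 1) (fun j => (n.testBit j).toNat) with hV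
  have hbit1 : ∀ n : ℕ, ∀ j, ((n.testBit j).toNat : ℕ) ≤ 1 := by
    intro n j; rcases n.testBit j <;> simp
  have hset : DinftyOne N d ∩ Set.Icc 0 b = V '' (Set.Iic n₀) := by
    ext x
    constructor
    · rintro ⟨⟨k, hk1, ℓ, hℓ, hx⟩, hx0, hxb⟩
      set ε : ℕ → ℕ := fun j => if h : j < k then (if ℓ ⟨j, h⟩ = d then 1 else 0) else 0 with hε
      have hε1 : ∀ j, ε j ≤ 1 := by
        intro j; simp only [hε]; split_ifs <;> omega
      have hε0 : ∀ j, k ≤ j → ε j = 0 := by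
        intro j hj; simp only [hε]; rw [dif_neg (by omega)]
      have hℓε : ∀ (j : ℕ) (h : j < k), ℓ ⟨j, h⟩ = d * ε j := by
        intro j h
        simp only [hε, dif_pos h]
        rcases hℓ ⟨j, h⟩ with h0 | h1
        · rw [if_neg (by rw [h0]; exact fun he => absurd he.symm hd.ne'), h0]; simp
        · rw [if_pos h1, h1]; simp
      have hxT : x = Tsum N d k ε := by
        rw [hx, Tsum, ← Fin.sum_univ_eq_sum_range (fun j => N ^ j * (d * ε j)) k]
        apply Finset.sum_congr rfl
        intro j _
        rw [show ℓ j = d * ε (j : ℕ) from hℓε j.1 j.isLt]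
      set M := max k (m + 1) with hM
      have hxM : x = Tsum N d M ε := by rw [hxT, Tsum_pad (le_max_left _ _) hε0]
      have hbM : b = Tsum N d M η := by rw [hbT, Tsum_pad (le_max_right _ _) hη0]
      have hBle : Bsum M ε ≤ Bsum M η := by
        rw [← Tsum_le_iff hN2 hd hε1 hη1 M (N := N) (d := d), ← hxM, ← hbM]
        exact hxb
      have hBη : Bsum M η = n₀ := Bsum_pad (le_max_right _ _) hη0
      set n := Bsum M ε with hn
      have hnM : n < 2 ^ M := Bsum_bound hε1 M
      have hnn₀ : n ≤ n₀ := by rw [hn, ← hBη]; exact hBle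
      refine ⟨n, hnn₀, ?_⟩
      have hrec : Bsum M (fun j => (n.testBit j).toNat) = n := Bsum_testBit M n hnM
      have hTM : Tsum N d M (fun j => (n.testBit j).toNat) = Tsum N d M ε :=
        Tsum_eq_of_Bsum_eq hN2 hd (hbit1 n) hε1 M (by rw [hrec])
      have hbit0 : ∀ j, (m + 1) ≤ j → ((n.testBit j).toNat : ℕ) = 0 := by
        intro j hj
        have hlt : n < 2 ^ j :=
          lt_of_lt_of_le (lt_of_le_of_lt hnn₀ hn₀lt) (Nat.pow_le_pow_right (by norm_num) hj)
        simp [Nat.testBit_eq_false_of_lt hlt]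
      simp only [hV]
      rw [← Tsum_pad (le_max_right k (m + 1)) hbit0, hTM, ← hxM]
    · rintro ⟨n, hn, rfl⟩
      have hnK : n < 2 ^ (m + 1) := lt_of_le_of_lt hn hn₀lt
      have hrec : Bsum (m + 1) (fun j => (n.testBit j).toNat) = n := Bsum_testBit (m + 1) n hnK
      refine ⟨⟨(m + 1), by omega, fun j => d * ((n.testBit (j : ℕ)).toNat : ℝ), ?_, ?_⟩, ?_, ?_⟩
      · intro j
        cases h : n.testBit (j : ℕ)
        · left; simp [h]
        · right; simp [h]
      · simp only [hV]
        rw [Tsum, ← Fin.sum_univ_eq_sum_range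
          (fun j => N ^ j * (d * ((n.testBit j).toNat : ℝ))) (m + 1)]
      · exact Tsum_nonneg (by linarith) hd.le (m + 1) _
      · simp only [hV]
        rw [hbT, Tsum_le_iff hN2 hd (hbit1 n) hη1 (m + 1), hrec]
        exact hn
  rw [hset]
  have hinj : Set.InjOn V (Set.Iic n₀) := by
    intro a ha b' hb' hab
    have haK : a < 2 ^ (m + 1) := lt_of_le_of_lt ha hn₀lt
    have hbK : b' < 2 ^ (m + 1) := lt_of_le_of_lt hb' hn₀lt
    have h1 : Bsum (m + 1) (fun j => (a.testBit j).toNat) = a := Bsum_testBit (m + 1) a haK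
    have h2 : Bsum (m + 1) (fun j => (b'.testBit j).toNat) = b' := Bsum_testBit (m + 1) b' hbK
    have hle1 : Bsum (m + 1) (fun j => (a.testBit j).toNat) ≤ Bsum (m + 1) (fun j => (b'.testBit j).toNat) :=
      (Tsum_le_iff hN2 hd (hbit1 a) (hbit1 b') (m + 1)).1 hab.le
    have hle2 : Bsum (m + 1) (fun j => (b'.testBit j).toNat) ≤ Bsum (m + 1) (fun j => (a.testBit j).toNat) :=
      (Tsum_le_iff hN2 hd (hbit1 b') (hbit1 a) (m + 1)).1 hab.ge
    omega
  rw [Set.ncard_image_of_injOn hinj]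
  have hcard : (Set.Iic n₀).ncard = n₀ + 1 := by
    rw [← Finset.coe_Iic, Set.ncard_coe_finset, Nat.card_Iic]
  rw [hcard]
  have hRHS : ∑ j : Fin (m + 1), (2:ℝ) ^ (j : ℕ) * (r j / d) = (n₀ : ℝ) := by
    have hterm : ∀ j : Fin (m + 1), (2:ℝ) ^ (j : ℕ) * (r j / d) = 2 ^ (j : ℕ) * (η j : ℝ) := by
      intro j
      rw [show r j = d * η (j : ℕ) from hrη j.1 j.isLt]
      field_simp
    rw [Finset.sum_congr rfl (fun j _ => hterm j),
      Fin.sum_univ_eq_sum_range (fun j => (2:ℝ) ^ j * (η j : ℝ)) (m + 1), hn₀, Bsum]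
    push_cast
    rfl
  rw [hRHS]
  push_cast
  ring
end

section
/- Let N ∈ ℝ with N ≥ 3, let d > 0 be real, and let μ be the limit measure associated with the dilation N and digit set {0,d}. Then for all real numbers a ≤ b, μ([a,b]) ≤ μ([0, b − a]). -/
open MeasureTheory
open scoped ENNReal

/-- The measure `μ = sup_k μ_k`, where
`μ_k = Σ_{ℓ_0,…,ℓ_{k−1} ∈ {0,d}} δ_{ℓ_0 + N ℓ_1 + ⋯ + N^{k−1} ℓ_{k−1}}` (sum over all
`k`-tuples from the digit set `{0, d}`, counted with multiplicity). -/
noncomputable def cantorMeasure (N d : ℝ) : Measure ℝ :=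
  ⨆ k : ℕ, Measure.sum (fun ℓ : Fin k → ({0, d} : Finset ℝ) =>
    Measure.dirac (∑ j : Fin k, N ^ (j : ℕ) * (ℓ j : ℝ)))

/-!
Write `μ_k` for the `k`-th approximating measure and `c = N^k d`. Then `μ_{k+1} = μ_k + τ_c μ_k`,
`τ_c` the translation by `c`, and since `N ≥ 3` the measure `μ_k` is carried by `[0, c/2]`.
This lets `μ_k [a, b] ≤ μ_k [0, b - a]` pass from `k` to `k + 1`. If `b - a ≥ c`,
inclusion–exclusion trades `[a, b]` and `[a - c, b - c]` for their union, whose mass is at most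
the total mass `μ_k [0, b - a]`, and their intersection `[a, b - c]`, to which the induction
hypothesis applies. If `b - a < c` the two intervals are disjoint, and either one of them misses
`[0, c/2]` or `b - a ≥ c/2`, so that `[0, b - a]` carries all of `μ_k`. Since the `μ_k`
increase, `μ` is their pointwise supremum on measurable sets.
-/

open Set

theorem MeasureTheory.Measure.iSup_apply_of_monotone_s13 {α ι : Type*} [MeasurableSpace α]
    [Preorder ι] [IsDirectedOrder ι] {μ : ι → Measure α} (hμ : Monotone μ) {s : Set α}
    (hs : MeasurableSet s) : (⨆ i, μ i) s = ⨆ i, μ i s := by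
  let ν : Measure α := Measure.ofMeasurable (fun t _ => ⨆ i, μ i t) (by simp)
    fun f hf hdisj => by
      simp_rw [measure_iUnion hdisj hf, ENNReal.tsum_eq_iSup_sum]
      rw [iSup_comm]
      exact iSup_congr fun t => (ENNReal.finsetSum_iSup_of_monotone
        fun i _ _ hjk => Measure.le_iff'.1 (hμ hjk) (f i)).symm
  have hν : ∀ t, MeasurableSet t → ν t = ⨆ i, μ i t := fun t ht => ofMeasurable_apply t ht
  refine le_antisymm ?_ (iSup_le fun i => Measure.le_iff'.1 (le_iSup μ i) s)
  calc (⨆ i, μ i) s ≤ ν s := Measure.le_iff'.1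
        (iSup_le fun i => Measure.le_iff.2 fun t ht => (hν t ht).symm ▸ le_iSup (μ · t) i) s
    _ = ⨆ i, μ i s := hν s hs

theorem MeasureTheory.Measure.map_add_const_Icc (μ : Measure ℝ) (c a b : ℝ) :
    μ.map (· + c) (Icc a b) = μ (Icc (a - c) (b - c)) := by
  rw [Measure.map_apply (measurable_add_const c) measurableSet_Icc, preimage_add_const_Icc]

section IccConcentration

variable {μ : Measure ℝ} {c : ℝ}

theorem add_map_add_const_Icc_le (hc : 0 ≤ c) (hμ : ∀ᵐ x ∂μ, x ∈ Icc 0 (c / 2))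
    (h : ∀ a b, a ≤ b → μ (Icc a b) ≤ μ (Icc 0 (b - a))) {a b : ℝ} (hab : a ≤ b) :
    (μ + μ.map (· + c)) (Icc a b) ≤ (μ + μ.map (· + c)) (Icc 0 (b - a)) := by
  have le_of_half_le : ∀ s {r}, c / 2 ≤ r → μ s ≤ μ (Icc 0 r) := fun s r hr =>
    measure_mono_ae <| hμ.mono fun x hx _ => ⟨hx.1, hx.2.trans hr⟩
  have null_of_disjoint : ∀ a' b', (b' < 0 ∨ c / 2 < a') → μ (Icc a' b') = 0 := fun a' b' h' =>
    measure_eq_zero_iff_ae_notMem.2 <| hμ.mono fun x hx hx' => by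
      rcases h' with h' | h' <;> linarith [hx.1, hx.2, hx'.1, hx'.2]
  simp only [Measure.add_apply, Measure.map_add_const_Icc]
  rcases le_or_gt c (b - a) with hbig | hsmall
  · have hunion : Icc a b ∪ Icc (a - c) (b - c) = Icc (a - c) b := by
      rw [Icc_union_Icc' (by linarith) (by linarith)]; congr 1 <;> simp [hc]
    have hinter : Icc a b ∩ Icc (a - c) (b - c) = Icc a (b - c) := by
      rw [Icc_inter_Icc]; congr 1 <;> simp [hc]
    calc μ (Icc a b) + μ (Icc (a - c) (b - c))
        = μ (Icc (a - c) b) + μ (Icc a (b - c)) := by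
          rw [← hunion, ← hinter, measure_union_add_inter _ measurableSet_Icc]
      _ ≤ μ (Icc 0 (b - a)) + μ (Icc (0 - c) (b - a - c)) := by
          refine add_le_add (le_of_half_le _ (by linarith)) ?_
          calc μ (Icc a (b - c)) ≤ μ (Icc 0 (b - c - a)) := h _ _ (by linarith)
            _ ≤ μ (Icc (0 - c) (b - a - c)) :=
              measure_mono <| Icc_subset_Icc (by linarith) (by linarith)
  rcases lt_or_ge b c with hb | hb
  · calc μ (Icc a b) + μ (Icc (a - c) (b - c)) = μ (Icc a b) := by
          rw [null_of_disjoint (a - c) (b - c) (Or.inl (by linarith)), add_zero]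
      _ ≤ μ (Icc 0 (b - a)) := h a b hab
      _ ≤ _ := le_self_add
  rcases lt_or_ge (c / 2) a with ha | ha
  · calc μ (Icc a b) + μ (Icc (a - c) (b - c)) = μ (Icc (a - c) (b - c)) := by
          rw [null_of_disjoint a b (Or.inr ha), zero_add]
      _ ≤ μ (Icc 0 (b - c - (a - c))) := h _ _ (by linarith)
      _ = μ (Icc 0 (b - a)) := by ring_nf
      _ ≤ _ := le_self_add
  · have hdisj : Disjoint (Icc a b) (Icc (a - c) (b - c)) :=
      Set.disjoint_left.2 fun x hx hx' => by linarith [hx.1, hx'.2]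
    calc μ (Icc a b) + μ (Icc (a - c) (b - c)) = μ (Icc a b ∪ Icc (a - c) (b - c)) :=
          (measure_union hdisj measurableSet_Icc).symm
      _ ≤ μ (Icc 0 (b - a)) := le_of_half_le _ (by linarith)
      _ ≤ _ := le_self_add

end IccConcentration

noncomputable def digitMeasure (N : ℝ) (D : Finset ℝ) (k : ℕ) : Measure ℝ :=
  Measure.sum fun ℓ : Fin k → D => Measure.dirac (∑ j : Fin k, N ^ (j : ℕ) * (ℓ j : ℝ))

theorem cantorMeasure_eq_iSup (N d : ℝ) : cantorMeasure N d = ⨆ k, digitMeasure N {0, d} k := rfl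

theorem digitMeasure_zero (N : ℝ) (D : Finset ℝ) : digitMeasure N D 0 = Measure.dirac 0 := by
  simp [digitMeasure, Measure.sum_fintype]

theorem digitMeasure_succ (N : ℝ) (D : Finset ℝ) (k : ℕ) :
    digitMeasure N D (k + 1) = ∑ t ∈ D, (digitMeasure N D k).map (· + N ^ k * t) := by
  simp only [digitMeasure, Measure.sum_fintype]
  rw [← (Fin.snocEquiv fun _ => D).sum_comp, Fintype.sum_prod_type, ← Finset.sum_coe_sort D]
  refine Finset.sum_congr rfl fun t _ => ?_
  rw [← Measure.sum_fintype, ← Measure.sum_fintype,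
    Measure.map_sum (measurable_add_const _).aemeasurable]
  congr 1 with ℓ
  rw [Measure.map_dirac' (measurable_add_const _), Fin.sum_univ_castSucc]
  simp [Fin.snocEquiv]

theorem digitMeasure_pair_succ (N : ℝ) {d : ℝ} (hd : d ≠ 0) (k : ℕ) :
    digitMeasure N {0, d} (k + 1) =
      digitMeasure N {0, d} k + (digitMeasure N {0, d} k).map (· + N ^ k * d) := by
  rw [digitMeasure_succ, Finset.sum_pair hd.symm]
  simp

section DigitPair

variable {N d : ℝ}

theorem ae_digitMeasure_pair_mem_Icc (hN : 3 ≤ N) (hd : 0 < d) (k : ℕ) :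
    ∀ᵐ x ∂digitMeasure N {0, d} k, x ∈ Icc 0 (N ^ k * d / 2) := by
  induction k with
  | zero =>
    rw [digitMeasure_zero, ae_dirac_iff (p := (· ∈ Icc _ _)) measurableSet_Icc]
    exact ⟨le_rfl, by positivity⟩
  | succ k ih =>
    have hc : 0 ≤ N ^ k * d := by positivity
    have hsub : Icc 0 (N ^ k * d / 2) ⊆ Icc 0 (N ^ (k + 1) * d / 2) :=
      Icc_subset_Icc le_rfl (by rw [pow_succ]; nlinarith)
    rw [digitMeasure_pair_succ N hd.ne', ae_add_measure_iff,
      ae_map_iff (p := (· ∈ Icc _ _)) (measurable_add_const _).aemeasurable measurableSet_Icc]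
    refine ⟨ih.mono fun x hx => hsub hx, ih.mono fun x hx => ⟨by linarith [hx.1], ?_⟩⟩
    -- the translate of `[0, c/2]` by `c = N^k d` ends at `3c/2 ≤ N c/2`
    rw [pow_succ]
    nlinarith [hx.2]

theorem digitMeasure_pair_mono (hd : d ≠ 0) : Monotone (digitMeasure N {0, d}) :=
  monotone_nat_of_le_succ fun k => by
    rw [digitMeasure_pair_succ N hd]
    exact Measure.le_add_right le_rfl

theorem digitMeasure_pair_Icc_le (hN : 3 ≤ N) (hd : 0 < d) (k : ℕ) {a b : ℝ} (hab : a ≤ b) :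
    digitMeasure N {0, d} k (Icc a b) ≤ digitMeasure N {0, d} k (Icc 0 (b - a)) := by
  induction k generalizing a b with
  | zero =>
    rw [digitMeasure_zero, Measure.dirac_apply_of_mem
      (show (0 : ℝ) ∈ Icc 0 (b - a) from ⟨le_rfl, sub_nonneg.2 hab⟩)]
    exact prob_le_one
  | succ k ih =>
    rw [digitMeasure_pair_succ N hd.ne']
    exact add_map_add_const_Icc_le (by positivity) (ae_digitMeasure_pair_mem_Icc hN hd k)
      (fun _ _ => ih) hab

end DigitPair

/-- **Lemma.** Let `N ≥ 3` be real and `d > 0`, and let `μ` be the limit measure associated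
with the dilation `N` and digit set `{0, d}`. Then for all reals `a ≤ b`,
`μ([a,b]) ≤ μ([0, b−a])`. -/
theorem cantorMeasure_Icc_le (N d : ℝ) (hN : 3 ≤ N) (hd : 0 < d) :
    ∀ a b : ℝ, a ≤ b →
      cantorMeasure N d (Set.Icc a b) ≤ cantorMeasure N d (Set.Icc 0 (b - a)) := by
  intro a b hab
  have hmono := digitMeasure_pair_mono (N := N) hd.ne'
  rw [cantorMeasure_eq_iSup, Measure.iSup_apply_of_monotone_s13 hmono measurableSet_Icc,
    Measure.iSup_apply_of_monotone_s13 hmono measurableSet_Icc]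
  exact iSup_mono fun k => digitMeasure_pair_Icc_le hN hd k hab
end

section
/- Let N ∈ ℝ with N ≥ 3 and let d > 0 be real. Let K be the unique nonempty compact subset of ℝ satisfying N·K = K ∪ (K + d). Then H^s(K) = ((N−1)/d)^{−s} = (d/(N−1))^s, where s = log 2/log N is the similarity dimension of K and H^s is the s-dimensional Hausdorff measure. -/
/-!
The level-`n` pieces `f_w [0, b]`, `b = d / (N - 1)`, are `2 ^ n` intervals of length
`b / N ^ n` covering `K`, which gives `μH[s] K ≤ b ^ s`. Conversely, since the two first-level
pieces are separated by a gap of length `(N - 2) b / N`, concavity of `x ↦ x ^ s` shows by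
induction that a set of diameter `L` contains at most `2 ^ n (L / b) ^ s` pieces of level `n`;
spreading mass `2 ^ (-n)` over these pieces then gives `b ^ s ≤ μH[s] K` by a mass distribution
argument.
-/

open MeasureTheory Set Filter Topology Metric
open scoped ENNReal NNReal Finset

theorem exists_isOpen_superset_ediam_rpow_lt {X : Type*} [PseudoEMetricSpace X] {t : Set X}
    {s : ℝ} (hs : 0 < s) (ht : ediam t ≠ ∞) {ε : ℝ≥0∞} (hε : ε ≠ 0) :
    ∃ U, IsOpen U ∧ t ⊆ U ∧ ediam U ^ s < ediam t ^ s + ε := by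
  have hcont : Continuous fun δ : ℝ≥0 => (ediam t + 2 * (δ : ℝ≥0∞)) ^ s :=
    ENNReal.continuous_rpow_const.comp <| continuous_const.add <|
      (ENNReal.continuous_const_mul (by simp)).comp ENNReal.continuous_coe
  have hlim : Tendsto (fun δ : ℝ≥0 => (ediam t + 2 * (δ : ℝ≥0∞)) ^ s) (𝓝[>] 0)
      (𝓝 (ediam t ^ s)) :=
    tendsto_nhdsWithin_of_tendsto_nhds (by simpa using hcont.tendsto 0)
  have hlt : ediam t ^ s < ediam t ^ s + ε :=
    ENNReal.lt_add_right (ENNReal.rpow_ne_top_of_nonneg hs.le ht) hε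
  obtain ⟨δ, hδlt, hδ⟩ :=
    ((hlim.eventually (gt_mem_nhds hlt)).and self_mem_nhdsWithin).exists
  exact ⟨thickening δ t, isOpen_thickening, self_subset_thickening (by exact_mod_cast hδ) t,
    (ENNReal.rpow_le_rpow (ediam_thickening_le δ) hs.le).trans_lt hδlt⟩

open scoped Classical in
/-- A discrete mass distribution principle: the uniform weights `1 / #(ι n)` on the pieces
`P n i` play the role of the mass distribution. -/
theorem le_hausdorffMeasure_of_card_subset_le {X : Type*} [EMetricSpace X] [MeasurableSpace X]
    [BorelSpace X] {K : Set X} (hK : IsCompact K) {s : ℝ} (hs : 0 < s)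
    {C : ℝ≥0∞} {ι : ℕ → Type*} [∀ n, Fintype (ι n)] [∀ n, Nonempty (ι n)]
    (P : ∀ n, ι n → Set X) (r : ℕ → ℝ≥0∞) (hr : Tendsto r atTop (𝓝 0))
    (hPr : ∀ n i, ediam (P n i) ≤ r n) (hPK : ∀ n i, (P n i ∩ K).Nonempty)
    (hcount : ∀ n (V : Set X), C * #{i | P n i ⊆ V} ≤ Fintype.card (ι n) * ediam V ^ s) :
    C ≤ μH[s] K := by
  rw [Measure.hausdorffMeasure_apply]
  refine le_iSup₂_of_le 1 one_pos (le_iInf₂ fun t hKt => le_iInf fun ht => ?_)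
  have hsum : ∑' j, ⨆ _ : (t j).Nonempty, ediam (t j) ^ s = ∑' j, ediam (t j) ^ s := by
    refine tsum_congr fun j => ?_
    rcases (t j).eq_empty_or_nonempty with hj | hj
    · simp [hj, ENNReal.zero_rpow_of_pos hs]
    · exact ciSup_pos hj
  rw [hsum]
  refine ENNReal.le_of_forall_pos_le_add fun ε hε _ => ?_
  obtain ⟨ε', hε'0, hε'⟩ :=
    ENNReal.exists_pos_sum_of_countable (ENNReal.coe_ne_zero.2 hε.ne') ℕ
  choose U hUo htU hU using fun j => exists_isOpen_superset_ediam_rpow_lt hs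
    ((ht j).trans_lt ENNReal.one_lt_top).ne (ENNReal.coe_ne_zero.2 (hε'0 j).ne')
  obtain ⟨δ, hδ, hball⟩ :=
    lebesgue_number_lemma_of_emetric hK hUo (hKt.trans (iUnion_mono htU))
  obtain ⟨n, hn⟩ := (hr.eventually (gt_mem_nhds hδ)).exists
  have hPU : ∀ i, ∃ j, P n i ⊆ U j := fun i => by
    obtain ⟨x, hxP, hxK⟩ := hPK n i
    obtain ⟨j, hj⟩ := hball x hxK
    exact ⟨j, fun y hy => hj ((edist_le_ediam_of_mem hy hxP).trans_lt ((hPr n i).trans_lt hn))⟩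
  choose g hg using hPU
  set M : ℝ≥0∞ := (Fintype.card (ι n) : ℝ≥0∞) with hM
  have hcard : M ≤ ∑' j, (#{i | P n i ⊆ U j} : ℝ≥0∞) := by
    rw [hM, ← Finset.card_univ, Finset.card_eq_sum_card_image g]
    push_cast
    refine le_trans (Finset.sum_le_sum fun j _ => ?_) (ENNReal.sum_le_tsum _)
    refine Nat.cast_le.2 (Finset.card_le_card fun i hi => ?_)
    simp only [Finset.mem_filter, Finset.mem_univ, true_and] at hi ⊢
    exact hi ▸ hg i
  have hMC : M * C ≤ M * ∑' j, ediam (U j) ^ s :=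
    calc M * C ≤ C * ∑' j, (#{i | P n i ⊆ U j} : ℝ≥0∞) := by
          rw [mul_comm]
          gcongr
      _ = ∑' j, C * #{i | P n i ⊆ U j} := ENNReal.tsum_mul_left.symm
      _ ≤ ∑' j, M * ediam (U j) ^ s := ENNReal.tsum_le_tsum fun j => hcount n _
      _ = M * ∑' j, ediam (U j) ^ s := ENNReal.tsum_mul_left
  calc C ≤ ∑' j, ediam (U j) ^ s :=
        (ENNReal.mul_le_mul_iff_right (by simp [M]) (by simp [M])).1 hMC
    _ ≤ ∑' j, (ediam (t j) ^ s + ε' j) := ENNReal.tsum_le_tsum fun j => (hU j).le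
    _ = ∑' j, ediam (t j) ^ s + ∑' j, (ε' j : ℝ≥0∞) := ENNReal.tsum_add
    _ ≤ ∑' j, ediam (t j) ^ s + ε := by gcongr

theorem card_filter_fin_succ {α : Type*} [Fintype α] {n : ℕ} (p : (Fin (n + 1) → α) → Prop)
    [DecidablePred p] : #{w | p w} = ∑ a, #{u : Fin n → α | p (Fin.cons a u)} := by
  simp only [Finset.card_filter]
  rw [← (Fin.consEquiv fun _ => α).sum_comp, Fintype.sum_prod_type]
  rfl

theorem rpow_add_rpow_le_of_gap {N s x y ℓ L : ℝ} (hN : 2 ≤ N) (hs0 : 0 ≤ s) (hs1 : s ≤ 1)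
    (hNs : N ^ s = 2) (hx : 0 ≤ x) (hy : 0 ≤ y) (hxℓ : x ≤ ℓ) (hyℓ : y ≤ ℓ)
    (hL : x + (N - 2) * ℓ + y ≤ L) : x ^ s + y ^ s ≤ L ^ s := by
  have hmid := (Real.concaveOn_rpow hs0 hs1).2 hx hy (by norm_num : (0:ℝ) ≤ 1 / 2)
    (by norm_num : (0:ℝ) ≤ 1 / 2) (by norm_num)
  simp only [smul_eq_mul] at hmid
  calc x ^ s + y ^ s ≤ N ^ s * ((x + y) / 2) ^ s := by
        rw [hNs, show (x + y) / 2 = 1 / 2 * x + 1 / 2 * y by ring]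
        linarith
    _ = (N * ((x + y) / 2)) ^ s := (Real.mul_rpow (by linarith) (by positivity)).symm
    _ ≤ L ^ s := by
        gcongr
        nlinarith

/-- The two similarities `x ↦ x / N` and `x ↦ (x + d) / N` of the equation
`N • K = K ∪ (K + d)`, written with `b = d / (N - 1)`, so that both map `[0, b]` into itself. -/
noncomputable def cantorMap (N b : ℝ) (i : Bool) (x : ℝ) : ℝ :=
  N⁻¹ * x + if i then (1 - N⁻¹) * b else 0

noncomputable def cantorPiece (N b : ℝ) : {n : ℕ} → (Fin n → Bool) → Set ℝ
  | 0, _ => Icc 0 b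
  | _ + 1, w => cantorMap N b (w 0) '' cantorPiece N b (Fin.tail w)

section Cantor

variable {N b s : ℝ}

theorem cantorMap_image_Icc (hN : 0 < N) (i : Bool) (p q : ℝ) :
    cantorMap N b i '' Icc p q = Icc (cantorMap N b i p) (cantorMap N b i q) :=
  image_affine_Icc' (inv_pos.2 hN) _ p q

theorem mul_le_cantorMap (hN : 1 ≤ N) (hb : 0 ≤ b) (i : Bool) (x : ℝ) :
    N⁻¹ * x ≤ cantorMap N b i x := by
  have : 0 ≤ (1 - N⁻¹) * b := mul_nonneg (sub_nonneg.2 (inv_le_one_of_one_le₀ hN)) hb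
  cases i <;> simp [cantorMap, this]

theorem cantorMap_le (hN : 1 ≤ N) (hb : 0 ≤ b) (i : Bool) (x : ℝ) :
    cantorMap N b i x ≤ N⁻¹ * x + (1 - N⁻¹) * b := by
  have : 0 ≤ (1 - N⁻¹) * b := mul_nonneg (sub_nonneg.2 (inv_le_one_of_one_le₀ hN)) hb
  cases i <;> simp [cantorMap, this]

theorem cantorMap_image_Icc_subset (hN : 1 ≤ N) (hb : 0 ≤ b) (i : Bool) :
    cantorMap N b i '' Icc 0 b ⊆ Icc 0 b := by
  rw [cantorMap_image_Icc (by linarith)]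
  refine Icc_subset_Icc (by simpa using mul_le_cantorMap hN hb i 0) ?_
  linarith [cantorMap_le hN hb i b]

theorem ediam_preimage_cantorMap_rpow_le (hN : 0 < N) (hs : 0 ≤ s) (hNs : N ^ s = 2) (i : Bool)
    (S : Set ℝ) : ediam (cantorMap N b i ⁻¹' S) ^ s ≤ 2 * ediam S ^ s := by
  have hanti : AntilipschitzWith N.toNNReal (cantorMap N b i) :=
    AntilipschitzWith.of_le_mul_dist fun x y => by
      rw [Real.coe_toNNReal _ hN.le, Real.dist_eq, Real.dist_eq, cantorMap, cantorMap,
        add_sub_add_right_eq_sub, ← mul_sub, abs_mul, abs_of_pos (inv_pos.2 hN),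
        mul_inv_cancel_left₀ hN.ne']
  calc ediam (cantorMap N b i ⁻¹' S) ^ s ≤ (ENNReal.ofReal N * ediam S) ^ s := by
        gcongr
        simpa [ENNReal.ofReal] using hanti.ediam_preimage_le S
    _ = 2 * ediam S ^ s := by
        rw [ENNReal.mul_rpow_of_nonneg _ _ hs, ENNReal.ofReal_rpow_of_pos hN, hNs,
          ENNReal.ofReal_ofNat]

theorem exists_cantorPiece_eq_Icc (hN : 0 < N) :
    ∀ {n : ℕ} (w : Fin n → Bool), ∃ p, cantorPiece N b w = Icc p (p + b / N ^ n)
  | 0, _ => ⟨0, by simp [cantorPiece]⟩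
  | n + 1, w => by
    obtain ⟨p, hp⟩ := exists_cantorPiece_eq_Icc hN (Fin.tail w)
    refine ⟨cantorMap N b (w 0) p, ?_⟩
    rw [cantorPiece, hp, cantorMap_image_Icc hN]
    congr 1
    simp only [cantorMap]
    field_simp
    ring

theorem ediam_cantorPiece (hN : 0 < N) {n : ℕ} (w : Fin n → Bool) :
    ediam (cantorPiece N b w) = ENNReal.ofReal (b / N ^ n) := by
  obtain ⟨p, hp⟩ := exists_cantorPiece_eq_Icc hN w
  rw [hp, Real.ediam_Icc, add_sub_cancel_left]

theorem cantorPiece_subset_Icc (hN : 1 ≤ N) (hb : 0 ≤ b) :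
    ∀ {n : ℕ} (w : Fin n → Bool), cantorPiece N b w ⊆ Icc 0 b
  | 0, _ => subset_rfl
  | _ + 1, w => (image_mono (cantorPiece_subset_Icc hN hb (Fin.tail w))).trans
      (cantorMap_image_Icc_subset hN hb _)

theorem sum_ediam_cantorPiece_rpow (hN : 0 < N) (hb : 0 < b) (hNs : N ^ s = 2) (n : ℕ) :
    ∑ w : Fin n → Bool, ediam (cantorPiece N b w) ^ s = ENNReal.ofReal b ^ s := by
  simp only [ediam_cantorPiece hN, Finset.sum_const, Finset.card_univ, Fintype.card_fun,
    Fintype.card_bool, Fintype.card_fin, nsmul_eq_mul]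
  rw [ENNReal.ofReal_rpow_of_pos (by positivity), ENNReal.ofReal_rpow_of_pos hb,
    Real.div_rpow hb.le (by positivity), ← Real.rpow_pow_comm hN.le, hNs,
    ← ENNReal.ofReal_natCast, ← ENNReal.ofReal_mul (by positivity)]
  congr 1
  push_cast
  field_simp

theorem ediam_Icc_inter_rpow_add_ediam_Icc_inter_rpow_le (hN : 2 ≤ N) (hs0 : 0 < s)
    (hs1 : s ≤ 1) (hNs : N ^ s = 2) (c₁ c₂ : ℝ) :
    ediam (Icc c₁ c₂ ∩ Icc 0 (N⁻¹ * b)) ^ s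
      + ediam (Icc c₁ c₂ ∩ Icc ((1 - N⁻¹) * b) b) ^ s ≤ ediam (Icc c₁ c₂) ^ s := by
  rw [Icc_inter_Icc, Icc_inter_Icc, Real.ediam_Icc, Real.ediam_Icc, Real.ediam_Icc]
  set x := min c₂ (N⁻¹ * b) - max c₁ 0
  set y := min c₂ b - max c₁ ((1 - N⁻¹) * b)
  have hx₁ : min c₂ (N⁻¹ * b) ≤ c₂ := min_le_left _ _
  have hx₂ : min c₂ (N⁻¹ * b) ≤ N⁻¹ * b := min_le_right _ _
  have hx₃ : c₁ ≤ max c₁ 0 := le_max_left _ _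
  have hx₄ : 0 ≤ max c₁ 0 := le_max_right _ _
  have hy₁ : min c₂ b ≤ c₂ := min_le_left _ _
  have hy₂ : min c₂ b ≤ b := min_le_right _ _
  have hy₃ : c₁ ≤ max c₁ ((1 - N⁻¹) * b) := le_max_left _ _
  have hy₄ : (1 - N⁻¹) * b ≤ max c₁ ((1 - N⁻¹) * b) := le_max_right _ _
  rcases le_or_gt x 0 with hx | hx
  · rw [ENNReal.ofReal_of_nonpos hx, ENNReal.zero_rpow_of_pos hs0, zero_add]
    gcongr
    linarith
  rcases le_or_gt y 0 with hy | hy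
  · rw [ENNReal.ofReal_of_nonpos hy, ENNReal.zero_rpow_of_pos hs0, add_zero]
    gcongr
    linarith
  rw [ENNReal.ofReal_rpow_of_pos hx, ENNReal.ofReal_rpow_of_pos hy,
    ENNReal.ofReal_rpow_of_nonneg (by linarith) hs0.le,
    ← ENNReal.ofReal_add (by positivity) (by positivity)]
  have hgap : (N - 2) * (N⁻¹ * b) = b - 2 * (N⁻¹ * b) := by
    field_simp
  refine ENNReal.ofReal_le_ofReal
    (rpow_add_rpow_le_of_gap hN hs0.le hs1 hNs hx.le hy.le (ℓ := N⁻¹ * b) ?_ ?_ ?_) <;>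
    linarith

theorem sum_ediam_inter_image_cantorMap_rpow_le (hN : 2 ≤ N) (hs0 : 0 < s) (hs1 : s ≤ 1)
    (hNs : N ^ s = 2) (V : Set ℝ) :
    ∑ i, ediam (V ∩ cantorMap N b i '' Icc 0 b) ^ s ≤ ediam V ^ s := by
  by_cases hV : Bornology.IsBounded V
  swap
  · rw [ediam_eq_top_iff_unbounded.2 hV, ENNReal.top_rpow_of_pos hs0]
    exact le_top
  have hVc := hV.subset_Icc_sInf_sSup
  simp only [Fintype.sum_bool, cantorMap_image_Icc (by linarith : (0 : ℝ) < N), cantorMap,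
    if_true, if_false, Bool.false_eq_true, mul_zero, add_zero, zero_add]
  rw [show N⁻¹ * b + (1 - N⁻¹) * b = b by ring, add_comm, Real.ediam_eq hV,
    ← Real.ediam_Icc]
  calc _ ≤ ediam (Icc (sInf V) (sSup V) ∩ Icc 0 (N⁻¹ * b)) ^ s
        + ediam (Icc (sInf V) (sSup V) ∩ Icc ((1 - N⁻¹) * b) b) ^ s := by
        gcongr
    _ ≤ _ := ediam_Icc_inter_rpow_add_ediam_Icc_inter_rpow_le hN hs0 hs1 hNs _ _

open scoped Classical in
theorem ofReal_rpow_mul_card_cantorPiece_subset_le (hN : 2 ≤ N) (hb : 0 ≤ b) (hs0 : 0 < s)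
    (hs1 : s ≤ 1) (hNs : N ^ s = 2) (n : ℕ) (V : Set ℝ) :
    ENNReal.ofReal b ^ s * #{w : Fin n → Bool | cantorPiece N b w ⊆ V} ≤
      2 ^ n * ediam V ^ s := by
  induction n generalizing V with
  | zero =>
    rw [pow_zero, one_mul]
    by_cases h : Icc 0 b ⊆ V
    · calc ENNReal.ofReal b ^ s * #{w : Fin 0 → Bool | cantorPiece N b w ⊆ V}
          ≤ ENNReal.ofReal b ^ s * 1 := by
            gcongr
            exact_mod_cast (Finset.card_le_univ _).trans (by simp)
        _ = ediam (Icc 0 b) ^ s := by rw [mul_one, Real.ediam_Icc, sub_zero]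
        _ ≤ ediam V ^ s := by gcongr
    · simp [cantorPiece, h]
  | succ n ih =>
    set A : Bool → Set ℝ := fun i => cantorMap N b i '' Icc 0 b
    have hbranch : ∀ i (u : Fin n → Bool), cantorPiece N b (Fin.cons i u) ⊆ V →
        cantorPiece N b u ⊆ cantorMap N b i ⁻¹' (V ∩ A i) := fun i u h =>
      image_subset_iff.1 (subset_inter h (image_mono (cantorPiece_subset_Icc (by linarith) hb u)))
    calc ENNReal.ofReal b ^ s * #{w : Fin (n + 1) → Bool | cantorPiece N b w ⊆ V}
        = ∑ i, ENNReal.ofReal b ^ s *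
            #{u : Fin n → Bool | cantorPiece N b (Fin.cons i u) ⊆ V} := by
          rw [card_filter_fin_succ, Nat.cast_sum, Finset.mul_sum]
      _ ≤ ∑ i, ENNReal.ofReal b ^ s *
            #{u : Fin n → Bool | cantorPiece N b u ⊆ cantorMap N b i ⁻¹' (V ∩ A i)} := by
          refine Finset.sum_le_sum fun i _ => mul_le_mul_right ?_ _
          exact Nat.cast_le.2 (Finset.card_le_card
            (Finset.monotone_filter_right _ fun u _ => hbranch i u))
      _ ≤ ∑ i, 2 ^ n * ediam (cantorMap N b i ⁻¹' (V ∩ A i)) ^ s :=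
          Finset.sum_le_sum fun i _ => ih _
      _ ≤ ∑ i, 2 ^ n * (2 * ediam (V ∩ A i) ^ s) := by
          gcongr with i
          exact ediam_preimage_cantorMap_rpow_le (by linarith) hs0.le hNs i _
      _ = 2 ^ (n + 1) * ∑ i, ediam (V ∩ A i) ^ s := by
          rw [← Finset.mul_sum, ← Finset.mul_sum, pow_succ, mul_assoc]
      _ ≤ 2 ^ (n + 1) * ediam V ^ s := by
          gcongr
          exact sum_ediam_inter_image_cantorMap_rpow_le hN hs0 hs1 hNs V

theorem iUnion_image_cantorMap_eq {K : Set ℝ} (hN : N ≠ 0)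
    (hK : (fun x => N * x) '' K = K ∪ (fun x => x + (N - 1) * b) '' K) :
    ⋃ i, cantorMap N b i '' K = K := by
  ext x
  have hx : x ∈ K ↔ N * x ∈ K ∨ ∃ y ∈ K, y + (N - 1) * b = N * x := by
    rw [← (mul_right_injective₀ hN).mem_set_image, hK]
    rfl
  have hmap : ∀ i y, cantorMap N b i y = x ↔ y + (if i then (N - 1) * b else 0) = N * x := by
    intro i y
    rw [cantorMap, ← (mul_right_injective₀ hN).eq_iff, mul_add, mul_inv_cancel_left₀ hN]
    cases i <;> simp [← mul_assoc, mul_sub, mul_inv_cancel₀ hN]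
  simp [Bool.exists_bool, hmap, hx]

theorem subset_Icc_of_iUnion_image_cantorMap_eq {K : Set ℝ} (hN : 1 < N) (hb : 0 ≤ b)
    (hKc : IsCompact K) (hK : ⋃ i, cantorMap N b i '' K = K) : K ⊆ Icc 0 b := by
  rcases K.eq_empty_or_nonempty with rfl | hne
  · exact empty_subset _
  have hpre : ∀ x ∈ K, ∃ i, ∃ y ∈ K, cantorMap N b i y = x := fun x hx => by
    rw [← hK] at hx
    simpa using hx
  have ht0 : 0 < N⁻¹ := inv_pos.2 (by linarith)
  have ht1 : N⁻¹ < 1 := inv_lt_one_of_one_lt₀ hN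
  obtain ⟨i, y, hy, hmy⟩ := hpre _ (hKc.sInf_mem hne)
  obtain ⟨j, z, hz, hMz⟩ := hpre _ (hKc.sSup_mem hne)
  have hm : N⁻¹ * sInf K ≤ sInf K :=
    calc N⁻¹ * sInf K ≤ N⁻¹ * y := by gcongr; exact csInf_le hKc.bddBelow hy
      _ ≤ cantorMap N b i y := mul_le_cantorMap hN.le hb i y
      _ = sInf K := hmy
  have hM : sSup K ≤ N⁻¹ * sSup K + (1 - N⁻¹) * b :=
    calc sSup K = cantorMap N b j z := hMz.symm
      _ ≤ N⁻¹ * z + (1 - N⁻¹) * b := cantorMap_le hN.le hb j z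
      _ ≤ N⁻¹ * sSup K + (1 - N⁻¹) * b := by gcongr; exact le_csSup hKc.bddAbove hz
  have h0 : 0 ≤ sInf K := by nlinarith
  have h1 : sSup K ≤ b := by nlinarith
  exact fun x hx => ⟨h0.trans (csInf_le hKc.bddBelow hx), (le_csSup hKc.bddAbove hx).trans h1⟩

theorem subset_iUnion_cantorPiece {K : Set ℝ} (hK : ⋃ i, cantorMap N b i '' K = K)
    (hK0 : K ⊆ Icc 0 b) : ∀ n : ℕ, K ⊆ ⋃ w : Fin n → Bool, cantorPiece N b w
  | 0 => hK0.trans (subset_iUnion_of_subset (fun _ => false) subset_rfl)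
  | n + 1 => by
    intro x hx
    rw [← hK] at hx
    obtain ⟨i, y, hy, rfl⟩ : ∃ i, ∃ y ∈ K, cantorMap N b i y = x := by simpa using hx
    obtain ⟨u, hu⟩ := mem_iUnion.1 (subset_iUnion_cantorPiece hK hK0 n hy)
    exact mem_iUnion.2 ⟨Fin.cons i u, mem_image_of_mem _ hu⟩

theorem cantorPiece_inter_nonempty {K : Set ℝ} (hK : ⋃ i, cantorMap N b i '' K = K)
    (hK0 : K ⊆ Icc 0 b) (hne : K.Nonempty) :
    ∀ {n : ℕ} (w : Fin n → Bool), (cantorPiece N b w ∩ K).Nonempty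
  | 0, _ => by
    rw [cantorPiece, inter_eq_right.2 hK0]
    exact hne
  | n + 1, w => by
    obtain ⟨y, hyP, hyK⟩ := cantorPiece_inter_nonempty hK hK0 hne (Fin.tail w)
    exact ⟨cantorMap N b (w 0) y, mem_image_of_mem _ hyP,
      hK ▸ mem_iUnion.2 ⟨w 0, mem_image_of_mem _ hyK⟩⟩

theorem hausdorffMeasure_eq_of_iUnion_image_cantorMap_eq {K : Set ℝ} (hN : 2 ≤ N) (hb : 0 < b)
    (hs0 : 0 < s) (hs1 : s ≤ 1) (hNs : N ^ s = 2) (hKc : IsCompact K) (hKne : K.Nonempty)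
    (hK : ⋃ i, cantorMap N b i '' K = K) : μH[s] K = ENNReal.ofReal b ^ s := by
  have hN0 : 0 < N := by linarith
  have hK0 : K ⊆ Icc 0 b := subset_Icc_of_iUnion_image_cantorMap_eq (by linarith) hb.le hKc hK
  have hr : Tendsto (fun n : ℕ => ENNReal.ofReal (b / N ^ n)) atTop (𝓝 0) := by
    simpa using ENNReal.tendsto_ofReal
      (tendsto_const_nhds.div_atTop (tendsto_pow_atTop_atTop_of_one_lt (by linarith)))
  refine le_antisymm ?_ ?_
  · calc μH[s] K
        ≤ liminf (fun n => ∑ w : Fin n → Bool, ediam (cantorPiece N b w) ^ s) atTop :=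
          Measure.hausdorffMeasure_le_liminf_sum s K _ hr (fun n w => cantorPiece N b w)
            (Eventually.of_forall fun n w => (ediam_cantorPiece hN0 w).le)
            (Eventually.of_forall (subset_iUnion_cantorPiece hK hK0))
      _ = ENNReal.ofReal b ^ s := by
          simp_rw [sum_ediam_cantorPiece_rpow hN0 hb hNs]
          exact liminf_const _
  · refine le_hausdorffMeasure_of_card_subset_le hKc hs0
      (fun n (w : Fin n → Bool) => cantorPiece N b w) _ hr
      (fun n w => (ediam_cantorPiece hN0 w).le)
      (fun n => cantorPiece_inter_nonempty hK hK0 hKne) fun n V => ?_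
    simpa using ofReal_rpow_mul_card_cantorPiece_subset_le hN hb.le hs0 hs1 hNs n V

end Cantor

/-- **Proposition.** Let `N ≥ 3` be real and `d > 0`, and let `K` be the unique nonempty
compact subset of `ℝ` satisfying `N·K = K ∪ (K + d)`. Then
`H^s(K) = ((N−1)/d)^{−s} = (d/(N−1))^s`, where `s = log 2 / log N` is the similarity
dimension of `K`. -/
theorem hausdorff_measure_cantor (N d : ℝ) (hN : 3 ≤ N) (hd : 0 < d)
    (K : Set ℝ) (hKc : IsCompact K) (hKne : K.Nonempty)
    (hK : (fun x => N * x) '' K = K ∪ (fun x => x + d) '' K)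
    (s : ℝ) (hs : s = Real.log 2 / Real.log N) :
    Measure.hausdorffMeasure s K = ENNReal.ofReal ((d / (N - 1)) ^ s) := by
  have hN0 : 0 < N := by linarith
  have hb : 0 < d / (N - 1) := div_pos hd (by linarith)
  have hNs : N ^ s = 2 := by
    rw [hs]
    exact Real.rpow_logb hN0 (by linarith) two_pos
  have hs0 : 0 < s := hs ▸ div_pos (Real.log_pos one_lt_two) (Real.log_pos (by linarith))
  have hs1 : s ≤ 1 :=
    hs ▸ (div_le_one (Real.log_pos (by linarith))).2 (Real.log_le_log two_pos (by linarith))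
  have hKself : ⋃ i, cantorMap N (d / (N - 1)) i '' K = K :=
    iUnion_image_cantorMap_eq hN0.ne' (by rwa [mul_div_cancel₀ d (by linarith : N - 1 ≠ 0)])
  rw [← ENNReal.ofReal_rpow_of_pos hb]
  exact hausdorffMeasure_eq_of_iUnion_image_cantorMap_eq (by linarith) hb hs0 hs1 hNs hKc hKne
    hKself
end

section
/- Let B be an n×n real expanding matrix and D ⊂ ℝⁿ a finite set with 0 ∈ D. Suppose that for some k ≥ 1 there exist tuples (d_0,…,d_{k−1}) ≠ (d'_0,…,d'_{k−1}) in D^k with Σ_{j=0}^{k−1} B^j d_j = Σ_{j=0}^{k−1} B^j d'_j (i.e. the expansions in D_k are not all distinct). Then D⁺(μ) = ∞. -/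
/-!
If two digit words `f ≠ g` of length `k` have the same expansion, then concatenating `m` blocks,
each equal to `f` or to `g`, produces `2 ^ m` distinct words of length `m * k` with one common
expansion. So `μ` has atoms of arbitrarily large mass, and since an atom lies in cubes of every
side length, already `sup_z μ(I_N(z)) = ∞` for every `N`.
-/

open MeasureTheory Filter
open scoped ENNReal

open Function

/-- The letter `c a b` of the concatenation sits at position `b + k * a`. -/
def concatWords {α : Type*} {m k : ℕ} : (Fin m → Fin k → α) ≃ (Fin (m * k) → α) :=
  (Equiv.curry _ _ _).symm.trans (finProdFinEquiv.arrowCongr (Equiv.refl α))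

@[simp]
lemma concatWords_apply_finProdFinEquiv {α : Type*} {m k : ℕ} (c : Fin m → Fin k → α)
    (a : Fin m) (b : Fin k) : concatWords c (finProdFinEquiv (a, b)) = c a b := by
  simp [concatWords]

lemma comp_concatWords {α β : Type*} {m k : ℕ} (φ : α → β) (c : Fin m → Fin k → α) :
    φ ∘ concatWords c = concatWords fun a => φ ∘ c a :=
  rfl

lemma injective_concatWords_cond {α : Type*} {m k : ℕ} {d d' : Fin k → α} (h : d ≠ d') :
    Injective fun s : Fin m → Bool => concatWords fun a => cond (s a) d d' := by
  have hcond : Injective fun b : Bool => cond b d d' := by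
    intro b b' hb
    cases b <;> cases b' <;> simp_all [eq_comm]
  exact concatWords.injective.comp hcond.comp_left

section DigitExpansion

variable {R E : Type*} [Semiring R] [AddCommMonoid E] [Module R E] (T : Module.End R E)

def digitExpansion {N : ℕ} (d : Fin N → E) : E :=
  ∑ j : Fin N, (T ^ (j : ℕ)) (d j)

lemma digitExpansion_concatWords {m k : ℕ} (c : Fin m → Fin k → E) :
    digitExpansion T (concatWords c) =
      ∑ a : Fin m, (T ^ (k * a : ℕ)) (digitExpansion T (c a)) := by
  rw [digitExpansion, ← finProdFinEquiv.sum_comp, Fintype.sum_prod_type]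
  refine Finset.sum_congr rfl fun a _ => ?_
  simp only [digitExpansion, map_sum, concatWords_apply_finProdFinEquiv, finProdFinEquiv_apply_val,
    add_comm _ (k * _), pow_add, Module.End.mul_apply]

variable {T}

lemma digitExpansion_concatWords_cond {m k : ℕ} {d d' : Fin k → E}
    (h : digitExpansion T d = digitExpansion T d') (s : Fin m → Bool) :
    digitExpansion T (concatWords fun a => cond (s a) d d') =
      digitExpansion T (concatWords fun _ : Fin m => d) := by
  simp only [digitExpansion_concatWords]
  refine Finset.sum_congr rfl fun a _ => ?_
  cases s a
  · rw [cond_false, h]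
  · rfl

end DigitExpansion

lemma digitExpansion_toEuclideanLin {𝕜 ι : Type*} [RCLike 𝕜] [Fintype ι] [DecidableEq ι]
    (B : Matrix ι ι 𝕜) {N : ℕ} (d : Fin N → EuclideanSpace 𝕜 ι) :
    digitExpansion (Matrix.toEuclideanLin B) d =
      ∑ j : Fin N, Matrix.toEuclideanLin (B ^ (j : ℕ)) (d j) := by
  simp [digitExpansion, Matrix.toLpLin_pow]

lemma card_le_sum_dirac_singleton {ι κ X : Type*} [MeasurableSpace X]
    [MeasurableSingletonClass X] [Fintype κ] {F : ι → X} {c : κ → ι} (hc : Injective c) {x : X}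
    (hx : ∀ i, F (c i) = x) :
    (Fintype.card κ : ℝ≥0∞) ≤ Measure.sum (fun i => Measure.dirac (F i)) {x} := by
  rw [Measure.sum_apply _ (measurableSet_singleton x)]
  calc (Fintype.card κ : ℝ≥0∞) = ∑' i : κ, Measure.dirac (F (c i)) {x} := by
        simp [hx, tsum_fintype]
    _ ≤ ∑' i, Measure.dirac (F i) {x} := ENNReal.tsum_comp_le_tsum_of_injective hc _

lemma beurlingUpper_eq_top_of_iSup_singleton_eq_top {n : ℕ}
    {ν : Measure (EuclideanSpace ℝ (Fin n))} (h : ⨆ x, ν {x} = ⊤) : beurlingUpper ν = ⊤ := by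
  have hcube : ∀ N : ℝ, 0 ≤ N →
      ⨆ z : EuclideanSpace ℝ (Fin n),
        ν {y | ∀ i, |y i - z i| ≤ N / 2} / ENNReal.ofReal (N ^ n) = ⊤ := by
    intro N hN
    rw [eq_top_iff, ← ENNReal.top_div_of_ne_top ENNReal.ofReal_ne_top, ← h, ENNReal.iSup_div]
    refine iSup_mono fun z => ENNReal.div_le_div_right (measure_mono fun y hy i => ?_) _
    rw [Set.mem_singleton_iff.mp hy, sub_self, abs_zero]
    positivity
  rw [beurlingUpper, limsup_congr ((eventually_ge_atTop 0).mono hcube), limsup_const]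

lemma sum_dirac_digitExpansion_le_selfAffineMeasure {n : ℕ} (B : Matrix (Fin n) (Fin n) ℝ)
    (D : Finset (EuclideanSpace ℝ (Fin n))) (N : ℕ) :
    Measure.sum (fun f : Fin N → D =>
      Measure.dirac (digitExpansion (Matrix.toEuclideanLin B) (Subtype.val ∘ f))) ≤
        selfAffineMeasure B D := by
  simp only [digitExpansion_toEuclideanLin, comp_apply]
  exact le_iSup (fun N : ℕ => Measure.sum fun f : Fin N → D =>
    Measure.dirac (∑ j : Fin N, Matrix.toEuclideanLin (B ^ (j : ℕ)) (f j))) N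

lemma iSup_selfAffineMeasure_singleton_eq_top {n k : ℕ} {B : Matrix (Fin n) (Fin n) ℝ}
    {D : Finset (EuclideanSpace ℝ (Fin n))} {f g : Fin k → D} (hfg : f ≠ g)
    (hsum : digitExpansion (Matrix.toEuclideanLin B) (Subtype.val ∘ f) =
      digitExpansion (Matrix.toEuclideanLin B) (Subtype.val ∘ g)) :
    ⨆ x, selfAffineMeasure B D {x} = ⊤ := by
  rw [eq_top_iff, ← ENNReal.iSup_natCast]
  refine iSup_le fun m => le_iSup_of_le
    (digitExpansion (Matrix.toEuclideanLin B) (Subtype.val ∘ concatWords fun _ : Fin m => f)) ?_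
  have hatom := card_le_sum_dirac_singleton
    (F := fun w : Fin (m * k) → D => digitExpansion (Matrix.toEuclideanLin B) (Subtype.val ∘ w))
    (injective_concatWords_cond (m := m) hfg) fun s => by
    simp only [comp_concatWords, Bool.apply_cond]
    exact digitExpansion_concatWords_cond hsum s
  calc (m : ℝ≥0∞) ≤ 2 ^ m := by exact_mod_cast Nat.lt_two_pow_self.le
    _ = Fintype.card (Fin m → Bool) := by simp
    _ ≤ _ := hatom
    _ ≤ _ := sum_dirac_digitExpansion_le_selfAffineMeasure B D (m * k) _

theorem upperBeurling_top_of_not_injective_general {n : ℕ} (B : Matrix (Fin n) (Fin n) ℝ)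
    (D : Finset (EuclideanSpace ℝ (Fin n)))
    (hcoll : ∃ k : ℕ, 1 ≤ k ∧ ∃ f g : Fin k → D, f ≠ g ∧
      ∑ j : Fin k, Matrix.toEuclideanLin (B ^ (j : ℕ)) (f j) =
        ∑ j : Fin k, Matrix.toEuclideanLin (B ^ (j : ℕ)) (g j)) :
    beurlingUpper (selfAffineMeasure B D) = ⊤ := by
  obtain ⟨k, -, f, g, hfg, hsum⟩ := hcoll
  refine beurlingUpper_eq_top_of_iSup_singleton_eq_top
    (iSup_selfAffineMeasure_singleton_eq_top hfg ?_)
  simpa only [digitExpansion_toEuclideanLin, comp_apply] using hsum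

/-- **Lemma.** Let `B` be an expanding real `n×n` matrix and `D ⊆ ℝⁿ` finite with `0 ∈ D`.
If for some `k ≥ 1` two distinct `k`-tuples of digits have the same expansion
`Σ_{j<k} B^j d_j`, then `D⁺(μ) = ∞`. -/
theorem upperBeurling_top_of_not_injective {n : ℕ} (B : Matrix (Fin n) (Fin n) ℝ)
    (hB : ∀ μ ∈ spectrum ℂ (B.map (algebraMap ℝ ℂ)), 1 < ‖μ‖)
    (D : Finset (EuclideanSpace ℝ (Fin n))) (hD0 : (0 : EuclideanSpace ℝ (Fin n)) ∈ D)
    (hcoll : ∃ k : ℕ, 1 ≤ k ∧ ∃ f g : Fin k → D, f ≠ g ∧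
      ∑ j : Fin k, Matrix.toEuclideanLin (B ^ (j : ℕ)) (f j) =
        ∑ j : Fin k, Matrix.toEuclideanLin (B ^ (j : ℕ)) (g j)) :
    beurlingUpper (selfAffineMeasure B D) = ⊤ :=
  upperBeurling_top_of_not_injective_general B D hcoll
end
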